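/- arXiv:math/0702004 — 6 statements merged into one kernel-verified Lean document; each statement's English description precedes it below -/
import Mathlib

section
/- For any symmetric bounded measurable function W : [0,1]² → ℝ, (1/2)·‖W‖_□ ≤ sup over measurable S ⊆ [0,1] of |∫_{S×S} W| ≤ ‖W‖_□. -/
open MeasureTheory

/-- The cut norm of a kernel `W` on `[0,1]²`: the supremum over measurable subsets
`S, T ⊆ [0,1]` of `|∫_{S×T} W|`. -/
noncomputable def cutNorm (W : ℝ → ℝ → ℝ) : ℝ :=
  sSup {r : ℝ | ∃ S T : Set ℝ, MeasurableSet S ∧ MeasurableSet T ∧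
    S ⊆ Set.Icc 0 1 ∧ T ⊆ Set.Icc 0 1 ∧ r = |∫ x in S, ∫ y in T, W x y|}

/-- The supremum of `|∫_{S×S} W|` over measurable `S ⊆ [0,1]`. -/
noncomputable def diagCutSup (W : ℝ → ℝ → ℝ) : ℝ :=
  sSup {r : ℝ | ∃ S : Set ℝ, MeasurableSet S ∧ S ⊆ Set.Icc 0 1 ∧
    r = |∫ x in S, ∫ y in S, W x y|}

/-!
Write `F(S, T) = ∫_{S×T} W`. Pointwise,
`1_{S×T} + 1_{T×S} = 1_{(S∪T)²} + 1_{(S∩T)²} - 1_{(S\T)²} - 1_{(T\S)²}`,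
so for symmetric `W` polarization gives
`2 F(S, T) = F(S∪T, S∪T) + F(S∩T, S∩T) - F(S\T, S\T) - F(T\S, T\S)`,
and each of the four diagonal terms is at most `sup_S |F(S, S)|` in absolute value.
-/

open Set

theorem indicator_prod_add_indicator_prod_swap {α E : Type*} [AddCommGroup E]
    (f : α × α → E) (S T : Set α) :
    (S ×ˢ T).indicator f + (T ×ˢ S).indicator f =
      ((S ∪ T) ×ˢ (S ∪ T)).indicator f + ((S ∩ T) ×ˢ (S ∩ T)).indicator f
        - ((S \ T) ×ˢ (S \ T)).indicator f - ((T \ S) ×ˢ (T \ S)).indicator f := by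
  ext ⟨x, y⟩
  by_cases x ∈ S <;> by_cases x ∈ T <;> by_cases y ∈ S <;> by_cases y ∈ T <;> simp [*]

section Polarization

variable {α E : Type*} [MeasurableSpace α] [NormedAddCommGroup E] [NormedSpace ℝ E]
  {μ : Measure α} {f : α × α → E} {S T : Set α}

theorem setIntegral_prod_add_setIntegral_prod_swap (hS : MeasurableSet S) (hT : MeasurableSet T)
    (hf : IntegrableOn f ((S ∪ T) ×ˢ (S ∪ T)) (μ.prod μ)) :
    ∫ z in S ×ˢ T, f z ∂μ.prod μ + ∫ z in T ×ˢ S, f z ∂μ.prod μ =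
      ∫ z in (S ∪ T) ×ˢ (S ∪ T), f z ∂μ.prod μ + ∫ z in (S ∩ T) ×ˢ (S ∩ T), f z ∂μ.prod μ
        - ∫ z in (S \ T) ×ˢ (S \ T), f z ∂μ.prod μ
        - ∫ z in (T \ S) ×ˢ (T \ S), f z ∂μ.prod μ := by
  have hint {X Y : Set α} (hX : MeasurableSet X) (hY : MeasurableSet Y) (hXU : X ⊆ S ∪ T)
      (hYU : Y ⊆ S ∪ T) : Integrable ((X ×ˢ Y).indicator f) (μ.prod μ) :=
    (hf.mono_set (prod_mono hXU hYU)).integrable_indicator (hX.prod hY)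
  have hSdT : S \ T ⊆ S ∪ T := sdiff_subset.trans subset_union_left
  have hTdS : T \ S ⊆ S ∪ T := sdiff_subset.trans subset_union_right
  have hSiT : S ∩ T ⊆ S ∪ T := inter_subset_left.trans subset_union_left
  have iU := hint (hS.union hT) (hS.union hT) subset_rfl subset_rfl
  have iSiT := hint (hS.inter hT) (hS.inter hT) hSiT hSiT
  have iSdT := hint (hS.diff hT) (hS.diff hT) hSdT hSdT
  have iTdS := hint (hT.diff hS) (hT.diff hS) hTdS hTdS
  simp only [← integral_indicator (MeasurableSet.prod _ _), hS, hT, hS.union hT, hS.inter hT,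
    hS.diff hT, hT.diff hS]
  rw [← integral_add' (hint hS hT subset_union_left subset_union_right)
      (hint hT hS subset_union_right subset_union_left),
    indicator_prod_add_indicator_prod_swap, integral_sub' ((iU.add iSiT).sub iSdT) iTdS,
    integral_sub' (iU.add iSiT) iSdT, integral_add' iU iSiT]

theorem setIntegral_prod_swap_of_symm [SFinite μ] (hsymm : ∀ z, f z.swap = f z) (S T : Set α) :
    ∫ z in T ×ˢ S, f z ∂μ.prod μ = ∫ z in S ×ˢ T, f z ∂μ.prod μ := by
  simpa only [hsymm] using setIntegral_prod_swap S T f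

theorem two_mul_setIntegral_prod_eq [SFinite μ] {f : α × α → ℝ} (hsymm : ∀ z, f z.swap = f z)
    (hS : MeasurableSet S) (hT : MeasurableSet T)
    (hf : IntegrableOn f ((S ∪ T) ×ˢ (S ∪ T)) (μ.prod μ)) :
    2 * ∫ z in S ×ˢ T, f z ∂μ.prod μ =
      ∫ z in (S ∪ T) ×ˢ (S ∪ T), f z ∂μ.prod μ + ∫ z in (S ∩ T) ×ˢ (S ∩ T), f z ∂μ.prod μ
        - ∫ z in (S \ T) ×ˢ (S \ T), f z ∂μ.prod μ
        - ∫ z in (T \ S) ×ˢ (T \ S), f z ∂μ.prod μ := by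
  rw [← setIntegral_prod_add_setIntegral_prod_swap hS hT hf,
    setIntegral_prod_swap_of_symm hsymm, two_mul]

end Polarization

section CutNorm

variable {α : Type*} [MeasurableSpace α]

noncomputable def cutNormOn (μ : Measure α) (U : Set α) (f : α × α → ℝ) : ℝ :=
  sSup {r : ℝ | ∃ S T : Set α, MeasurableSet S ∧ MeasurableSet T ∧ S ⊆ U ∧ T ⊆ U ∧
    r = |∫ z in S ×ˢ T, f z ∂μ.prod μ|}

noncomputable def diagCutSupOn (μ : Measure α) (U : Set α) (f : α × α → ℝ) : ℝ :=
  sSup {r : ℝ | ∃ S : Set α, MeasurableSet S ∧ S ⊆ U ∧ r = |∫ z in S ×ˢ S, f z ∂μ.prod μ|}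

variable {μ : Measure α} {U S T : Set α} {f : α × α → ℝ}

theorem abs_setIntegral_prod_le (hf : IntegrableOn f (U ×ˢ U) (μ.prod μ)) (hS : S ⊆ U)
    (hT : T ⊆ U) : |∫ z in S ×ˢ T, f z ∂μ.prod μ| ≤ ∫ z in U ×ˢ U, |f z| ∂μ.prod μ :=
  (abs_integral_le_integral_abs).trans
    (setIntegral_mono_set hf.abs (.of_forall fun _ => abs_nonneg _) (prod_mono hS hT).eventuallyLE)

theorem bddAbove_cutNormOn_set (hf : IntegrableOn f (U ×ˢ U) (μ.prod μ)) :
    BddAbove {r : ℝ | ∃ S T : Set α, MeasurableSet S ∧ MeasurableSet T ∧ S ⊆ U ∧ T ⊆ U ∧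
      r = |∫ z in S ×ˢ T, f z ∂μ.prod μ|} := by
  refine ⟨∫ z in U ×ˢ U, |f z| ∂μ.prod μ, ?_⟩
  rintro r ⟨S, T, -, -, hS, hT, rfl⟩
  exact abs_setIntegral_prod_le hf hS hT

theorem abs_setIntegral_prod_self_le_diagCutSupOn (hf : IntegrableOn f (U ×ˢ U) (μ.prod μ))
    (hSm : MeasurableSet S) (hS : S ⊆ U) :
    |∫ z in S ×ˢ S, f z ∂μ.prod μ| ≤ diagCutSupOn μ U f := by
  refine le_csSup ⟨∫ z in U ×ˢ U, |f z| ∂μ.prod μ, ?_⟩ ⟨S, hSm, hS, rfl⟩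
  rintro r ⟨S, -, hS, rfl⟩
  exact abs_setIntegral_prod_le hf hS hS

theorem abs_setIntegral_prod_le_two_mul_diagCutSupOn [SFinite μ] (hsymm : ∀ z, f z.swap = f z)
    (hf : IntegrableOn f (U ×ˢ U) (μ.prod μ)) (hSm : MeasurableSet S) (hTm : MeasurableSet T)
    (hS : S ⊆ U) (hT : T ⊆ U) :
    |∫ z in S ×ˢ T, f z ∂μ.prod μ| ≤ 2 * diagCutSupOn μ U f := by
  have hdiag {X : Set α} (hXm : MeasurableSet X) (hX : X ⊆ U) :=
    abs_le.mp (abs_setIntegral_prod_self_le_diagCutSupOn hf hXm hX)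
  have hSTU : S ∪ T ⊆ U := union_subset hS hT
  have hpol := two_mul_setIntegral_prod_eq hsymm hSm hTm (hf.mono_set (prod_mono hSTU hSTU))
  have h₁ := hdiag (hSm.union hTm) hSTU
  have h₂ := hdiag (hSm.inter hTm) (inter_subset_left.trans hS)
  have h₃ := hdiag (hSm.diff hTm) (sdiff_subset.trans hS)
  have h₄ := hdiag (hTm.diff hSm) (sdiff_subset.trans hT)
  rw [abs_le]
  constructor <;> linarith

theorem half_cutNormOn_le_diagCutSupOn [SFinite μ] (hsymm : ∀ z, f z.swap = f z)
    (hf : IntegrableOn f (U ×ˢ U) (μ.prod μ)) :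
    (1 / 2) * cutNormOn μ U f ≤ diagCutSupOn μ U f ∧ diagCutSupOn μ U f ≤ cutNormOn μ U f := by
  constructor
  · have : cutNormOn μ U f ≤ 2 * diagCutSupOn μ U f := by
      refine csSup_le ⟨_, ∅, ∅, .empty, .empty, empty_subset U, empty_subset U, rfl⟩ ?_
      rintro r ⟨S, T, hSm, hTm, hS, hT, rfl⟩
      exact abs_setIntegral_prod_le_two_mul_diagCutSupOn hsymm hf hSm hTm hS hT
    linarith
  · refine csSup_le_csSup (bddAbove_cutNormOn_set hf) ⟨_, ∅, .empty, empty_subset U, rfl⟩ ?_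
    rintro r ⟨S, hSm, hS, rfl⟩
    exact ⟨S, S, hSm, hSm, hS, hS, rfl⟩

end CutNorm

theorem cutNorm_eq_cutNormOn {W : ℝ → ℝ → ℝ}
    (hW : IntegrableOn (Function.uncurry W) (Icc 0 1 ×ˢ Icc 0 1) (volume.prod volume)) :
    cutNorm W = cutNormOn volume (Icc 0 1) (Function.uncurry W) := by
  unfold cutNorm cutNormOn
  congr 1
  ext r
  refine exists₂_congr fun S T => and_congr_right fun _ => and_congr_right fun _ =>
    and_congr_right fun hS => and_congr_right fun hT => ?_
  rw [setIntegral_prod _ (hW.mono_set (prod_mono hS hT))]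
  rfl

theorem diagCutSup_eq_diagCutSupOn {W : ℝ → ℝ → ℝ}
    (hW : IntegrableOn (Function.uncurry W) (Icc 0 1 ×ˢ Icc 0 1) (volume.prod volume)) :
    diagCutSup W = diagCutSupOn volume (Icc 0 1) (Function.uncurry W) := by
  unfold diagCutSup diagCutSupOn
  congr 1
  ext r
  refine exists_congr fun S => and_congr_right fun _ => and_congr_right fun hS => ?_
  rw [setIntegral_prod _ (hW.mono_set (prod_mono hS hS))]
  rfl

theorem integrableOn_Icc_prod_Icc_of_bounded {f : ℝ × ℝ → ℝ} (hmeas : Measurable f) {C : ℝ}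
    (hC : ∀ z, |f z| ≤ C) (a b : ℝ) :
    IntegrableOn f (Icc a b ×ˢ Icc a b) (volume.prod volume) := by
  refine Measure.integrableOn_of_bounded ?_ hmeas.aestronglyMeasurable (.of_forall hC)
  rw [← Measure.volume_eq_prod]
  exact (isCompact_Icc.prod isCompact_Icc).measure_ne_top

/-- For any symmetric bounded measurable `W : [0,1]² → ℝ`,
`(1/2)·‖W‖_□ ≤ sup_S |∫_{S×S} W| ≤ ‖W‖_□`. -/
theorem half_cutNorm_le_diagCutSup (W : ℝ → ℝ → ℝ)
    (hmeas : Measurable (Function.uncurry W))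
    (hsymm : ∀ x y, W x y = W y x)
    (hbdd : ∃ C : ℝ, ∀ x y, |W x y| ≤ C) :
    (1 / 2) * cutNorm W ≤ diagCutSup W ∧ diagCutSup W ≤ cutNorm W := by
  obtain ⟨C, hC⟩ := hbdd
  have hW := integrableOn_Icc_prod_Icc_of_bounded hmeas (fun z => hC z.1 z.2) 0 1
  rw [cutNorm_eq_cutNormOn hW, diagCutSup_eq_diagCutSupOn hW]
  exact half_cutNormOn_le_diagCutSupOn (fun z => hsymm z.2 z.1) hW
end

section
/- Let W be a symmetric bounded measurable function on [0,1]² with ‖W‖_∞ ≤ 1. Then (1/4)·t(C₄, W) ≤ ‖W‖_□ ≤ t(C₄, W)^{1/4}, where t(C₄, W) = ∫_{[0,1]⁴} W(x₁,x₂)W(x₂,x₃)W(x₃,x₄)W(x₄,x₁) dx₁dx₂dx₃dx₄. -/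
open MeasureTheory

/-- The homomorphism density of the 4-cycle `C₄` in a kernel `W`:
`t(C₄,W) = ∫_{[0,1]⁴} W(x₁,x₂)W(x₂,x₃)W(x₃,x₄)W(x₄,x₁) dx`. -/
noncomputable def tC4 (W : ℝ → ℝ → ℝ) : ℝ :=
  ∫ x₁ in Set.Icc (0:ℝ) 1, ∫ x₂ in Set.Icc (0:ℝ) 1, ∫ x₃ in Set.Icc (0:ℝ) 1,
    ∫ x₄ in Set.Icc (0:ℝ) 1, W x₁ x₂ * W x₂ x₃ * W x₃ x₄ * W x₄ x₁

/-!
For the lower bound, write `t(C₄,W) = ∫∫ W(x₁,x₂) B(x₂,x₁)` where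
`B(x₂,x₁) = ∫∫ f(x) W(x,y) g(y)` with `f = W(x₂,·)`, `g = W(·,x₁)`. Such a bilinear form with
`|f|, |g| ≤ 1` is at most `4‖W‖_□`: integrating `f` against `φ = ∫ W(·,y) g(y) dy` gives at
most `∫ |φ|`, which splitting at the sign of `φ` bounds by two integrals of `φ` over sets `S`;
by Fubini each of these is `g` integrated against `∫_S W(x,·) dx`, and the same splitting
reduces it to two rectangle integrals `∫_{S×T} W`.

For the upper bound, Cauchy–Schwarz twice gives
`(∫_{S×T} W)⁴ ≤ (∫_{T×T} codegree)² ≤ ∫∫ codegree² = t(C₄,W)`, where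
`codegree(y,z) = ∫ W(x,y) W(x,z) dx` and the last equality uses the symmetry of `W`.
-/

open Set Function ProbabilityTheory

lemma abs_mul_le_one {a b : ℝ} (ha : |a| ≤ 1) (hb : |b| ≤ 1) : |a * b| ≤ 1 := by
  rw [abs_mul]; exact mul_le_one₀ ha (abs_nonneg _) hb

section

variable {α : Type*} [MeasurableSpace α] {μ : Measure α}

lemma abs_integral_mul_le_two_mul_of_abs_setIntegral_le {f φ : α → ℝ} {c : ℝ}
    (hf : ∀ x, |f x| ≤ 1) (hφm : Measurable φ) (hφ : Integrable φ μ)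
    (h : ∀ s, MeasurableSet s → |∫ x in s, φ x ∂μ| ≤ c) :
    |∫ x, f x * φ x ∂μ| ≤ 2 * c := by
  have h_abs : ∫ x, |φ x| ∂μ = ∫ x in {x | 0 ≤ φ x}, φ x ∂μ - ∫ x in {x | φ x ≤ 0}, φ x ∂μ := by
    simpa only [Real.norm_eq_abs] using integral_norm_eq_pos_sub_neg hφ
  have h_pos := h {x | 0 ≤ φ x} (measurableSet_le measurable_const hφm)
  have h_neg := h {x | φ x ≤ 0} (measurableSet_le hφm measurable_const)
  calc |∫ x, f x * φ x ∂μ| ≤ ∫ x, |φ x| ∂μ := by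
        refine abs_integral_le_integral_abs.trans <| integral_mono_of_nonneg
          (ae_of_all _ fun _ => abs_nonneg _) hφ.abs (ae_of_all _ fun x => ?_)
        simp only [abs_mul]
        exact mul_le_of_le_one_left (abs_nonneg _) (hf x)
    _ ≤ 2 * c := by
        rw [h_abs]
        linarith [le_abs_self (∫ x in {x | 0 ≤ φ x}, φ x ∂μ),
          neg_abs_le (∫ x in {x | φ x ≤ 0}, φ x ∂μ)]

lemma sq_integral_le_integral_sq [IsProbabilityMeasure μ] {f : α → ℝ} (hf : MemLp f 2 μ) :
    (∫ x, f x ∂μ) ^ 2 ≤ ∫ x, f x ^ 2 ∂μ := by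
  have h := variance_nonneg f μ
  rw [variance_eq_sub hf] at h
  simpa using h

end

instance : IsProbabilityMeasure (volume.restrict (Icc (0 : ℝ) 1)) :=
  ⟨by simp [Real.volume_Icc]⟩

lemma Measurable.setIntegral_right {α : Type*} [MeasurableSpace α] {F : α → ℝ → ℝ}
    (hF : Measurable (uncurry F)) (T : Set ℝ) : Measurable fun x => ∫ y in T, F x y :=
  (hF.stronglyMeasurable.integral_prod_right' (ν := volume.restrict T)).measurable

section UnitInterval

variable {S T : Set ℝ}

lemma volume_lt_top_of_subset_Icc (hS : S ⊆ Icc 0 1) : volume S < ⊤ :=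
  (measure_mono hS).trans_lt measure_Icc_lt_top

lemma abs_setIntegral_le_of_subset_Icc (hS : S ⊆ Icc 0 1) {f : ℝ → ℝ} {C : ℝ}
    (hf : ∀ x, |f x| ≤ C) : |∫ x in S, f x| ≤ C := by
  have hC : 0 ≤ C := (abs_nonneg _).trans (hf 0)
  have hS1 : volume.real S ≤ 1 := (measureReal_mono hS measure_Icc_lt_top.ne).trans (by simp)
  calc |∫ x in S, f x| = ‖∫ x in S, f x‖ := (Real.norm_eq_abs _).symm
    _ ≤ C * volume.real S := norm_setIntegral_le_of_norm_le_const
        (volume_lt_top_of_subset_Icc hS) fun x _ => (Real.norm_eq_abs _).trans_le (hf x)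
    _ ≤ C := mul_le_of_le_one_right hC hS1

lemma setIntegral_setIntegral_swap_of_subset_Icc (hS : S ⊆ Icc 0 1) (hT : T ⊆ Icc 0 1)
    {F : ℝ → ℝ → ℝ} (hF : Measurable (uncurry F)) {C : ℝ} (hFC : ∀ x y, |F x y| ≤ C) :
    ∫ x in S, ∫ y in T, F x y = ∫ y in T, ∫ x in S, F x y := by
  have := isFiniteMeasure_restrict.2 (volume_lt_top_of_subset_Icc hS).ne
  have := isFiniteMeasure_restrict.2 (volume_lt_top_of_subset_Icc hT).ne
  exact integral_integral_swap
    (Integrable.of_bound hF.aestronglyMeasurable C (ae_of_all _ fun p => hFC p.1 p.2))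

lemma sq_setIntegral_le_integral_sq (hS : MeasurableSet S) (hS1 : S ⊆ Icc 0 1) {f : ℝ → ℝ}
    (hf : Measurable f) {C : ℝ} (hfC : ∀ x, |f x| ≤ C) :
    (∫ x in S, f x) ^ 2 ≤ ∫ x in Icc 0 1, f x ^ 2 := by
  have h_ind : ∫ x in S, f x = ∫ x in Icc 0 1, S.indicator f x := by
    rw [setIntegral_indicator hS, inter_eq_right.2 hS1]
  have h_ind_le : ∀ x, |S.indicator f x| ≤ C := fun x => by
    by_cases hx : x ∈ S <;> simp [hx, hfC x, (abs_nonneg _).trans (hfC x)]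
  rw [h_ind]
  refine (sq_integral_le_integral_sq (MemLp.of_bound (hf.indicator hS).aestronglyMeasurable C
    (ae_of_all _ h_ind_le))).trans (integral_mono_of_nonneg (ae_of_all _ fun _ => sq_nonneg _)
    (Integrable.of_bound (hf.pow_const 2).aestronglyMeasurable (C ^ 2) (ae_of_all _ fun x => ?_))
    (ae_of_all _ fun x => ?_))
  · simpa [abs_pow] using pow_le_pow_left₀ (abs_nonneg _) (hfC x) 2
  · by_cases hx : x ∈ S <;> simp [hx, sq_nonneg]

lemma sq_setIntegral_setIntegral_le (hS : MeasurableSet S) (hS1 : S ⊆ Icc 0 1)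
    (hT : MeasurableSet T) (hT1 : T ⊆ Icc 0 1) {K : ℝ → ℝ → ℝ} (hK : Measurable (uncurry K))
    (hK1 : ∀ y z, |K y z| ≤ 1) :
    (∫ y in S, ∫ z in T, K y z) ^ 2 ≤ ∫ y in Icc 0 1, ∫ z in Icc 0 1, K y z ^ 2 := by
  have hK2 : ∀ y z, |K y z ^ 2| ≤ 1 := fun y z => by
    rw [abs_pow]; exact pow_le_one₀ (abs_nonneg _) (hK1 y z)
  have hrow : Measurable fun y => ∫ z in Icc 0 1, K y z ^ 2 :=
    Measurable.setIntegral_right (F := fun y z => K y z ^ 2) (by fun_prop) _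
  calc (∫ y in S, ∫ z in T, K y z) ^ 2 ≤ ∫ y in Icc 0 1, (∫ z in T, K y z) ^ 2 :=
        sq_setIntegral_le_integral_sq hS hS1 (hK.setIntegral_right T)
          fun y => abs_setIntegral_le_of_subset_Icc hT1 (hK1 y)
    _ ≤ ∫ y in Icc 0 1, ∫ z in Icc 0 1, K y z ^ 2 :=
        integral_mono_of_nonneg (ae_of_all _ fun _ => sq_nonneg _)
          (Integrable.of_bound hrow.aestronglyMeasurable 1 (ae_of_all _ fun y =>
            abs_setIntegral_le_of_subset_Icc subset_rfl (hK2 y)))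
          (ae_of_all _ fun y => sq_setIntegral_le_integral_sq hT hT1 (by fun_prop) (hK1 y))

end UnitInterval

section CutNorm

variable {W : ℝ → ℝ → ℝ} {S T : Set ℝ}

lemma abs_setIntegral_setIntegral_le_cutNorm (hbdd : ∀ x y, |W x y| ≤ 1)
    (hS : MeasurableSet S) (hT : MeasurableSet T) (hS1 : S ⊆ Icc 0 1) (hT1 : T ⊆ Icc 0 1) :
    |∫ x in S, ∫ y in T, W x y| ≤ cutNorm W := by
  refine le_csSup ⟨1, ?_⟩ ⟨S, T, hS, hT, hS1, hT1, rfl⟩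
  rintro _ ⟨S', T', -, -, hS1', hT1', rfl⟩
  exact abs_setIntegral_le_of_subset_Icc hS1' fun x =>
    abs_setIntegral_le_of_subset_Icc hT1' (hbdd x)

lemma cutNorm_le_of_forall_abs_setIntegral_le {c : ℝ}
    (h : ∀ S T : Set ℝ, MeasurableSet S → MeasurableSet T → S ⊆ Icc 0 1 → T ⊆ Icc 0 1 →
      |∫ x in S, ∫ y in T, W x y| ≤ c) :
    cutNorm W ≤ c := by
  refine csSup_le ⟨_, ∅, ∅, .empty, .empty, empty_subset _, empty_subset _, rfl⟩ ?_
  rintro _ ⟨S, T, hS, hT, hS1, hT1, rfl⟩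
  exact h S T hS hT hS1 hT1

lemma abs_setIntegral_integral_mul_le_two_mul_cutNorm (hmeas : Measurable (uncurry W))
    (hbdd : ∀ x y, |W x y| ≤ 1) {g : ℝ → ℝ} (hg : Measurable g) (hg1 : ∀ y, |g y| ≤ 1)
    (hS : MeasurableSet S) (hS1 : S ⊆ Icc 0 1) :
    |∫ x in S, ∫ y in Icc 0 1, W x y * g y| ≤ 2 * cutNorm W := by
  have hWg : ∀ x y, |W x y * g y| ≤ 1 := fun x y => abs_mul_le_one (hbdd x y) (hg1 y)
  have hψm : Measurable fun y => ∫ x in S, W x y :=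
    Measurable.setIntegral_right (F := fun y x => W x y) (by fun_prop) S
  have hψ1 : ∀ y, |∫ x in S, W x y| ≤ 1 := fun y =>
    abs_setIntegral_le_of_subset_Icc hS1 fun x => hbdd x y
  have h_swap : ∫ x in S, ∫ y in Icc 0 1, W x y * g y
      = ∫ y in Icc 0 1, g y * ∫ x in S, W x y := by
    rw [setIntegral_setIntegral_swap_of_subset_Icc hS1 subset_rfl (by fun_prop) hWg]
    simp only [integral_mul_const, mul_comm]
  rw [h_swap]
  refine abs_integral_mul_le_two_mul_of_abs_setIntegral_le hg1 hψm
    (Integrable.of_bound hψm.aestronglyMeasurable 1 (ae_of_all _ hψ1)) fun t ht => ?_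
  rw [Measure.restrict_restrict ht, ← setIntegral_setIntegral_swap_of_subset_Icc hS1
    inter_subset_right (by fun_prop) hbdd]
  exact abs_setIntegral_setIntegral_le_cutNorm hbdd hS (ht.inter measurableSet_Icc) hS1
    inter_subset_right

lemma abs_integral_integral_mul_le_four_mul_cutNorm (hmeas : Measurable (uncurry W))
    (hbdd : ∀ x y, |W x y| ≤ 1) {f g : ℝ → ℝ} (hg : Measurable g) (hf1 : ∀ x, |f x| ≤ 1)
    (hg1 : ∀ y, |g y| ≤ 1) :
    |∫ x in Icc 0 1, ∫ y in Icc 0 1, f x * W x y * g y| ≤ 4 * cutNorm W := by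
  have hφm : Measurable fun x => ∫ y in Icc 0 1, W x y * g y :=
    Measurable.setIntegral_right (F := fun x y => W x y * g y) (by fun_prop) _
  have hφ1 : ∀ x, |∫ y in Icc 0 1, W x y * g y| ≤ 1 := fun x =>
    abs_setIntegral_le_of_subset_Icc subset_rfl fun y => abs_mul_le_one (hbdd x y) (hg1 y)
  simp only [mul_assoc, integral_const_mul]
  rw [show (4 : ℝ) * cutNorm W = 2 * (2 * cutNorm W) by ring]
  refine abs_integral_mul_le_two_mul_of_abs_setIntegral_le hf1 hφm
    (Integrable.of_bound hφm.aestronglyMeasurable 1 (ae_of_all _ hφ1)) fun s hs => ?_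
  rw [Measure.restrict_restrict hs]
  exact abs_setIntegral_integral_mul_le_two_mul_cutNorm hmeas hbdd hg hg1
    (hs.inter measurableSet_Icc) inter_subset_right

lemma abs_tC4_le_four_mul_cutNorm (hmeas : Measurable (uncurry W))
    (hbdd : ∀ x y, |W x y| ≤ 1) : |tC4 W| ≤ 4 * cutNorm W := by
  have h_eq : tC4 W = ∫ x₁ in Icc 0 1, ∫ x₂ in Icc 0 1,
      W x₁ x₂ * ∫ x₃ in Icc 0 1, ∫ x₄ in Icc 0 1, W x₂ x₃ * W x₃ x₄ * W x₄ x₁ := by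
    simp only [tC4, ← integral_const_mul, mul_assoc]
  rw [h_eq]
  refine abs_setIntegral_le_of_subset_Icc subset_rfl fun x₁ =>
    abs_setIntegral_le_of_subset_Icc subset_rfl fun x₂ => ?_
  rw [abs_mul]
  exact (mul_le_of_le_one_left (abs_nonneg _) (hbdd x₁ x₂)).trans
    (abs_integral_integral_mul_le_four_mul_cutNorm hmeas hbdd (by fun_prop) (hbdd x₂)
      fun x₄ => hbdd x₄ x₁)

end CutNorm

noncomputable def codegree (W : ℝ → ℝ → ℝ) (y z : ℝ) : ℝ := ∫ x in Icc 0 1, W x y * W x z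

section Codegree

variable {W : ℝ → ℝ → ℝ} {S T : Set ℝ}

lemma codegree_comm (y z : ℝ) : codegree W y z = codegree W z y := by
  simp only [codegree, mul_comm]

lemma measurable_codegree (hmeas : Measurable (uncurry W)) : Measurable (uncurry (codegree W)) :=
  Measurable.setIntegral_right (F := fun (p : ℝ × ℝ) x => W x p.1 * W x p.2) (by fun_prop) _

lemma abs_codegree_le_one (hbdd : ∀ x y, |W x y| ≤ 1) (y z : ℝ) : |codegree W y z| ≤ 1 :=
  abs_setIntegral_le_of_subset_Icc subset_rfl fun x => abs_mul_le_one (hbdd x y) (hbdd x z)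

lemma tC4_eq_integral_codegree_sq (hmeas : Measurable (uncurry W))
    (hsymm : ∀ x y, W x y = W y x) (hbdd : ∀ x y, |W x y| ≤ 1) :
    tC4 W = ∫ x₁ in Icc 0 1, ∫ x₃ in Icc 0 1, codegree W x₁ x₃ ^ 2 := by
  have hcod := measurable_codegree hmeas
  have h_x₄ : ∀ x₁ x₂ x₃, ∫ x₄ in Icc 0 1, W x₁ x₂ * W x₂ x₃ * W x₃ x₄ * W x₄ x₁
      = W x₁ x₂ * W x₂ x₃ * codegree W x₃ x₁ := fun x₁ x₂ x₃ => by
    simp only [codegree, ← integral_const_mul, hsymm x₃, mul_assoc]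
  have h_x₂ : ∀ x₁ x₃, ∫ x₂ in Icc 0 1, W x₁ x₂ * W x₂ x₃ * codegree W x₃ x₁
      = codegree W x₁ x₃ ^ 2 := fun x₁ x₃ => by
    rw [integral_mul_const, codegree_comm x₃ x₁, sq, codegree]
    simp only [hsymm x₁]
  unfold tC4
  simp only [h_x₄]
  refine integral_congr_ae (ae_of_all _ fun x₁ => ?_)
  dsimp only
  rw [setIntegral_setIntegral_swap_of_subset_Icc subset_rfl subset_rfl (by fun_prop) (C := 1)
    fun x₂ x₃ => ?_]
  · simp only [h_x₂]
  · exact abs_mul_le_one (abs_mul_le_one (hbdd _ _) (hbdd _ _)) (abs_codegree_le_one hbdd _ _)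

lemma integral_sq_setIntegral_eq (hmeas : Measurable (uncurry W)) (hbdd : ∀ x y, |W x y| ≤ 1)
    (hT1 : T ⊆ Icc 0 1) :
    ∫ x in Icc 0 1, (∫ y in T, W x y) ^ 2 = ∫ y in T, ∫ z in T, codegree W y z := by
  have hWW : ∀ x y z, |W x y * W x z| ≤ 1 := fun x y z => abs_mul_le_one (hbdd x y) (hbdd x z)
  have h_sq : ∀ x, (∫ y in T, W x y) ^ 2 = ∫ y in T, ∫ z in T, W x y * W x z := fun x => by
    rw [sq, ← integral_mul_const]
    exact integral_congr_ae (ae_of_all _ fun y => (integral_const_mul _ _).symm)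
  have h_meas : Measurable (uncurry fun x y => ∫ z in T, W x y * W x z) :=
    Measurable.setIntegral_right (F := fun (p : ℝ × ℝ) z => W p.1 p.2 * W p.1 z) (by fun_prop) T
  simp only [h_sq]
  rw [setIntegral_setIntegral_swap_of_subset_Icc subset_rfl hT1 h_meas
    fun x y => abs_setIntegral_le_of_subset_Icc hT1 (hWW x y)]
  refine integral_congr_ae (ae_of_all _ fun y => ?_)
  exact setIntegral_setIntegral_swap_of_subset_Icc subset_rfl hT1 (by fun_prop) fun x z => hWW x y z

lemma pow_four_setIntegral_setIntegral_le_tC4 (hmeas : Measurable (uncurry W))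
    (hsymm : ∀ x y, W x y = W y x) (hbdd : ∀ x y, |W x y| ≤ 1)
    (hS : MeasurableSet S) (hT : MeasurableSet T) (hS1 : S ⊆ Icc 0 1) (hT1 : T ⊆ Icc 0 1) :
    (∫ x in S, ∫ y in T, W x y) ^ 4 ≤ tC4 W := by
  have h_first : (∫ x in S, ∫ y in T, W x y) ^ 2 ≤ ∫ x in Icc 0 1, (∫ y in T, W x y) ^ 2 :=
    sq_setIntegral_le_integral_sq hS hS1 (hmeas.setIntegral_right T)
      fun x => abs_setIntegral_le_of_subset_Icc hT1 (hbdd x)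
  have h_second : (∫ x in Icc 0 1, (∫ y in T, W x y) ^ 2) ^ 2 ≤ tC4 W := by
    rw [integral_sq_setIntegral_eq hmeas hbdd hT1, tC4_eq_integral_codegree_sq hmeas hsymm hbdd]
    exact sq_setIntegral_setIntegral_le hT hT1 hT hT1 (measurable_codegree hmeas)
      (abs_codegree_le_one hbdd)
  calc (∫ x in S, ∫ y in T, W x y) ^ 4 = ((∫ x in S, ∫ y in T, W x y) ^ 2) ^ 2 := by ring
    _ ≤ (∫ x in Icc 0 1, (∫ y in T, W x y) ^ 2) ^ 2 := pow_le_pow_left₀ (sq_nonneg _) h_first 2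
    _ ≤ tC4 W := h_second

end Codegree

/-- For a symmetric measurable `W : [0,1]² → ℝ` with `‖W‖_∞ ≤ 1`,
`(1/4)·t(C₄,W) ≤ ‖W‖_□ ≤ t(C₄,W)^{1/4}`. -/
theorem tC4_cutNorm_bounds (W : ℝ → ℝ → ℝ)
    (hmeas : Measurable (Function.uncurry W))
    (hsymm : ∀ x y, W x y = W y x)
    (hbdd : ∀ x y, |W x y| ≤ 1) :
    (1 / 4) * tC4 W ≤ cutNorm W ∧ cutNorm W ≤ (tC4 W) ^ ((1 : ℝ) / 4) := by
  refine ⟨by linarith [le_abs_self (tC4 W), abs_tC4_le_four_mul_cutNorm hmeas hbdd], ?_⟩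
  refine cutNorm_le_of_forall_abs_setIntegral_le fun S T hS hT hS1 hT1 => ?_
  set A := ∫ x in S, ∫ y in T, W x y
  have h_pow : |A| ^ 4 ≤ tC4 W := by
    rw [pow_abs, abs_of_nonneg (by positivity)]
    exact pow_four_setIntegral_setIntegral_le_tC4 hmeas hsymm hbdd hS hT hS1 hT1
  rw [one_div]
  calc |A| = (|A| ^ 4) ^ (4 : ℝ)⁻¹ := by
        exact_mod_cast (Real.pow_rpow_inv_natCast (abs_nonneg A) four_ne_zero).symm
    _ ≤ tC4 W ^ (4 : ℝ)⁻¹ := Real.rpow_le_rpow (by positivity) h_pow (by norm_num)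
end

section
/- For any graphon W with ‖W‖_∞ ≤ C and any finite simple graph F with at least one edge, |t(F, W)| ≤ 4 C^{|E(F)|−1} · ‖W‖_□. -/
/-!
Fix an edge `uv` of `F` and all coordinates other than `x_u = a` and `x_v = b`. The integrand
factors as `W(a,b) f(a) g(b)`, where `f` collects the remaining edges at `u` and `g` all other
remaining edges, so `|f| ≤ C^p`, `|g| ≤ C^q` with `p + q = |E(F)| - 1`. It remains to show
`|∫∫ W(a,b) f(a) g(b)| ≤ 4 ‖f‖_∞ ‖g‖_∞ ‖W‖_□`. If `|∫_S h| ≤ c` for every measurable `S`, then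
splitting by the sign of `h` gives `∫ |h| ≤ 2c`, hence `|∫ h g| ≤ 2 ‖g‖_∞ c`. Applied first to
`h(a) = ∫_T W(a,b) db` and then to `h(b) = ∫ W(a,b) f(a) da`, this gives the factor `4`.
-/

open MeasureTheory

/-- Homomorphism density `t(F,W) = ∫_{[0,1]^k} ∏_{ij ∈ E(F)} W(x_i,x_j) dx`. -/
noncomputable def homDensity {k : ℕ} (F : SimpleGraph (Fin k)) [DecidableRel F.Adj]
    (W : ℝ → ℝ → ℝ) (hsymm : ∀ x y, W x y = W y x) : ℝ :=
  ∫ x in Set.univ.pi (fun _ : Fin k => Set.Icc (0:ℝ) 1),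
    ∏ e ∈ F.edgeFinset,
      Sym2.lift ⟨fun u v => W (x u) (x v), fun a b => hsymm (x a) (x b)⟩ e

open Set Function

section Pi

variable {ι : Type*} [Fintype ι] [DecidableEq ι] {α : ι → Type*} [∀ i, MeasurableSpace (α i)]
  (μ : ∀ i, Measure (α i)) [∀ i, SigmaFinite (μ i)] (i : ι) [IsProbabilityMeasure (μ i)]

theorem measurePreserving_update_pi :
    MeasurePreserving (fun p : (∀ j, α j) × α i => update p.1 i p.2)
      ((Measure.pi μ).prod (μ i)) (Measure.pi μ) := by
  refine ⟨measurable_update', (Measure.pi_eq fun s hs => ?_).symm⟩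
  have hpre : (fun p : (∀ j, α j) × α i => update p.1 i p.2) ⁻¹' univ.pi s
      = univ.pi (update s i univ) ×ˢ s i := by
    ext ⟨x, a⟩
    simp only [mem_preimage, mem_prod, update_mem_pi_iff]
    grind
  rw [Measure.map_apply measurable_update' (.univ_pi hs), hpre, Measure.prod_prod, Measure.pi_pi,
    ← Finset.prod_erase_mul _ _ (Finset.mem_univ i),
    ← Finset.prod_erase_mul _ _ (Finset.mem_univ i), update_self, measure_univ, mul_one]
  exact congr_arg (· * _) <| Finset.prod_congr rfl fun j hj => by
    rw [update_of_ne (Finset.ne_of_mem_erase hj)]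

variable {μ} {E : Type*} [NormedAddCommGroup E] [NormedSpace ℝ E] {f : (∀ j, α j) → E}

theorem integral_pi_eq_integral_update (hf : Integrable f (Measure.pi μ)) :
    ∫ x, f x ∂Measure.pi μ = ∫ x, ∫ a, f (update x i a) ∂μ i ∂Measure.pi μ := by
  have hupd := measurePreserving_update_pi μ i
  calc ∫ x, f x ∂Measure.pi μ = ∫ x, f x ∂((Measure.pi μ).prod (μ i)).map _ := by
        rw [hupd.map_eq]
    _ = _ := integral_map hupd.measurable.aemeasurable (by rw [hupd.map_eq]; exact hf.1)
    _ = _ := integral_prod _ (hupd.integrable_comp_of_integrable hf)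

theorem MeasureTheory.Integrable.integral_update (hf : Integrable f (Measure.pi μ)) :
    Integrable (fun x => ∫ a, f (update x i a) ∂μ i) (Measure.pi μ) :=
  ((measurePreserving_update_pi μ i).integrable_comp_of_integrable hf).integral_prod_left

end Pi

section Bounds

variable {α β : Type*} [MeasurableSpace α] [MeasurableSpace β]

theorem abs_integral_le_of_forall_abs_le {μ : Measure α} [IsProbabilityMeasure μ] {f : α → ℝ}
    {B : ℝ} (h : ∀ x, |f x| ≤ B) : |∫ x, f x ∂μ| ≤ B :=
  calc |∫ x, f x ∂μ| ≤ B * μ.real univ :=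
        norm_integral_le_of_norm_le_const (f := f) (ae_of_all μ h)
    _ = B := by rw [probReal_univ, mul_one]

theorem abs_setIntegral_le_of_measure_le_one {μ : Measure α} {S : Set α} (hS : μ S ≤ 1)
    {f : α → ℝ} {B : ℝ} (hB : 0 ≤ B) (hf : ∀ x, |f x| ≤ B) : |∫ x in S, f x ∂μ| ≤ B :=
  calc |∫ x in S, f x ∂μ| ≤ B * μ.real S :=
        norm_setIntegral_le_of_norm_le_const (f := f) (hS.trans_lt ENNReal.one_lt_top)
          fun x _ => hf x
    _ ≤ B * 1 := by
        gcongr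
        exact ENNReal.toReal_le_of_le_ofReal zero_le_one (by simpa using hS)
    _ = B := mul_one B

theorem integrable_uncurry_of_abs_le {μ : Measure α} {ν : Measure β} [IsFiniteMeasure μ]
    [IsFiniteMeasure ν] {f : α → β → ℝ} (hf : Measurable (uncurry f)) {B : ℝ}
    (hB : ∀ x y, |f x y| ≤ B) : Integrable (uncurry f) (μ.prod ν) :=
  .of_bound hf.aestronglyMeasurable B (ae_of_all _ fun p => hB p.1 p.2)

theorem abs_integral_mul_le_of_abs_setIntegral_le {μ : Measure α} {h g : α → ℝ}
    (hm : Measurable h) (hi : Integrable h μ) {N c : ℝ} (hN : 0 ≤ N) (hgN : ∀ x, |g x| ≤ N)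
    (hc : ∀ s, MeasurableSet s → |∫ x in s, h x ∂μ| ≤ c) :
    |∫ x, h x * g x ∂μ| ≤ 2 * N * c := by
  have habs : ∫ x, |h x| ∂μ ≤ 2 * c := by
    have hpos := hc {x | 0 ≤ h x} (measurableSet_le measurable_const hm)
    have hneg := hc {x | h x ≤ 0} (measurableSet_le hm measurable_const)
    have hsplit := integral_norm_eq_pos_sub_neg hi
    simp only [Real.norm_eq_abs] at hsplit
    rw [hsplit]
    linarith [le_abs_self (∫ x in {x | 0 ≤ h x}, h x ∂μ),
      neg_abs_le (∫ x in {x | h x ≤ 0}, h x ∂μ)]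
  calc |∫ x, h x * g x ∂μ| ≤ ∫ x, N * |h x| ∂μ := by
        refine norm_integral_le_of_norm_le (f := fun x => h x * g x) (hi.abs.const_mul N)
          (ae_of_all _ fun x => ?_)
        rw [Real.norm_eq_abs, abs_mul, mul_comm]
        exact mul_le_mul_of_nonneg_right (hgN x) (abs_nonneg _)
    _ = N * ∫ x, |h x| ∂μ := integral_const_mul N _
    _ ≤ N * (2 * c) := mul_le_mul_of_nonneg_left habs hN
    _ = 2 * N * c := by ring

end Bounds

instance : IsProbabilityMeasure (volume.restrict (Icc (0:ℝ) 1)) :=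
  ⟨by simp⟩

local notation "λI" => volume.restrict (Icc (0:ℝ) 1)

section CutNorm

variable {W : ℝ → ℝ → ℝ} {C : ℝ}

theorem abs_integral_restrict_le_cutNorm (hb : ∀ x y, |W x y| ≤ C) {S T : Set ℝ}
    (hS : MeasurableSet S) (hT : MeasurableSet T) :
    |∫ x in S, ∫ y in T, W x y ∂λI ∂λI| ≤ cutNorm W := by
  have hC : 0 ≤ C := (abs_nonneg _).trans (hb 0 0)
  have hvol : ∀ {U : Set ℝ}, U ⊆ Icc 0 1 → volume U ≤ 1 := fun hU =>
    (measure_mono hU).trans_eq (by simp)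
  simp only [Measure.restrict_restrict hS, Measure.restrict_restrict hT]
  refine le_csSup ⟨C, ?_⟩ ⟨S ∩ Icc 0 1, T ∩ Icc 0 1, hS.inter measurableSet_Icc,
    hT.inter measurableSet_Icc, inter_subset_right, inter_subset_right, rfl⟩
  rintro r ⟨S', T', -, -, hS', hT', rfl⟩
  exact abs_setIntegral_le_of_measure_le_one (hvol hS') hC fun x =>
    abs_setIntegral_le_of_measure_le_one (hvol hT') hC (hb x)

theorem abs_integral_setIntegral_mul_le_cutNorm (hmeas : Measurable (uncurry W))
    (hb : ∀ x y, |W x y| ≤ C) {T : Set ℝ} (hT : MeasurableSet T) {f : ℝ → ℝ} {M : ℝ}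
    (hM : 0 ≤ M) (hfM : ∀ x, |f x| ≤ M) :
    |∫ x, (∫ y in T, W x y ∂λI) * f x ∂λI| ≤ 2 * M * cutNorm W :=
  abs_integral_mul_le_of_abs_setIntegral_le
    (hmeas.stronglyMeasurable.integral_prod_right' (ν := λI.restrict T)).measurable
    (integrable_uncurry_of_abs_le hmeas hb).integral_prod_left hM hfM
    fun _ hS => abs_integral_restrict_le_cutNorm hb hS hT

theorem abs_integral_integral_mul_mul_le_cutNorm (hmeas : Measurable (uncurry W))
    (hb : ∀ x y, |W x y| ≤ C) {f g : ℝ → ℝ} (hf : Measurable f) (hg : Measurable g) {M N : ℝ}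
    (hM : 0 ≤ M) (hN : 0 ≤ N) (hfM : ∀ x, |f x| ≤ M) (hgN : ∀ y, |g y| ≤ N) :
    |∫ x, ∫ y, W x y * f x * g y ∂λI ∂λI| ≤ 4 * M * N * cutNorm W := by
  have hC : 0 ≤ C := (abs_nonneg _).trans (hb 0 0)
  have hWf : Measurable (uncurry fun x y => W x y * f x) := hmeas.mul (hf.comp measurable_fst)
  have hWf_le : ∀ x y, |W x y * f x| ≤ C * M := fun x y => by
    rw [abs_mul]
    exact mul_le_mul (hb x y) (hfM x) (abs_nonneg _) hC
  have hswap : ∫ x, ∫ y, W x y * f x * g y ∂λI ∂λI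
      = ∫ y, (∫ x, W x y * f x ∂λI) * g y ∂λI := by
    rw [integral_integral_swap (integrable_uncurry_of_abs_le (hWf.mul (hg.comp measurable_snd))
      fun x y => (abs_mul _ _).trans_le (mul_le_mul (hWf_le x y) (hgN y) (abs_nonneg _)
        (mul_nonneg hC hM)))]
    simp only [← integral_mul_const]
  have hset : ∀ T, MeasurableSet T →
      |∫ y in T, ∫ x, W x y * f x ∂λI ∂λI| ≤ 2 * M * cutNorm W := fun T hT => by
    rw [← integral_integral_swap (integrable_uncurry_of_abs_le hWf hWf_le)]
    simpa only [integral_mul_const] using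
      abs_integral_setIntegral_mul_le_cutNorm hmeas hb hT hM hfM
  rw [hswap]
  calc _ ≤ 2 * N * (2 * M * cutNorm W) :=
        abs_integral_mul_le_of_abs_setIntegral_le
          (hWf.stronglyMeasurable.integral_prod_left' (μ := λI)).measurable
          (integrable_uncurry_of_abs_le hWf hWf_le).integral_prod_right hN hgN hset
    _ = 4 * M * N * cutNorm W := by ring

end CutNorm

section EdgeWeight

variable {V : Type*} (W : ℝ → ℝ → ℝ) (hsymm : ∀ x y, W x y = W y x) {C : ℝ}

def edgeWeight (x : V → ℝ) : Sym2 V → ℝ :=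
  Sym2.lift ⟨fun u v => W (x u) (x v), fun a b => hsymm (x a) (x b)⟩

@[simp]
theorem edgeWeight_mk (x : V → ℝ) (u v : V) : edgeWeight W hsymm x s(u, v) = W (x u) (x v) :=
  rfl

variable {W}

theorem edgeWeight_update_of_notMem [DecidableEq V] {e : Sym2 V} {i : V} (hi : i ∉ e)
    (x : V → ℝ) (a : ℝ) : edgeWeight W hsymm (update x i a) e = edgeWeight W hsymm x e := by
  induction e using Sym2.ind with
  | _ p q =>
    rw [Sym2.mem_iff, not_or] at hi
    simp [update_of_ne (Ne.symm hi.1), update_of_ne (Ne.symm hi.2)]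

theorem abs_edgeWeight_le (hb : ∀ x y, |W x y| ≤ C) (x : V → ℝ) (e : Sym2 V) :
    |edgeWeight W hsymm x e| ≤ C := by
  induction e using Sym2.ind with
  | _ p q => exact hb _ _

theorem abs_prod_edgeWeight_le (hb : ∀ x y, |W x y| ≤ C) (s : Finset (Sym2 V)) (x : V → ℝ) :
    |∏ e ∈ s, edgeWeight W hsymm x e| ≤ C ^ s.card := by
  rw [Finset.abs_prod, ← Finset.prod_const]
  exact Finset.prod_le_prod (fun _ _ => abs_nonneg _) fun e _ => abs_edgeWeight_le hsymm hb x e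

theorem measurable_edgeWeight (hmeas : Measurable (uncurry W)) (e : Sym2 V) :
    Measurable fun x : V → ℝ => edgeWeight W hsymm x e := by
  induction e using Sym2.ind with
  | _ p q =>
    exact hmeas.comp (f := fun x : V → ℝ => (x p, x q))
      ((measurable_pi_apply p).prodMk (measurable_pi_apply q))

theorem prod_edgeWeight_update_update [DecidableEq V] {s : Finset (Sym2 V)} {u v : V}
    (huv : u ≠ v) (he : s(u, v) ∈ s) (x : V → ℝ) (a b : ℝ) :
    ∏ e ∈ s, edgeWeight W hsymm (update (update x u a) v b) e
      = W a b * (∏ e ∈ (s.erase s(u, v)).filter (u ∈ ·), edgeWeight W hsymm (update x u a) e)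
        * ∏ e ∈ (s.erase s(u, v)).filter (u ∉ ·), edgeWeight W hsymm (update x v b) e := by
  rw [← Finset.mul_prod_erase _ _ he, ← Finset.prod_filter_mul_prod_filter_not _ (u ∈ ·),
    mul_assoc]
  congr 1
  · simp [update_of_ne huv]
  congr 1
  · refine Finset.prod_congr rfl fun e he' => ?_
    obtain ⟨he_ne, hu⟩ := Finset.mem_filter.1 he'
    have hv : v ∉ e := fun hv =>
      Finset.ne_of_mem_erase he_ne ((Sym2.mem_and_mem_iff huv).1 ⟨hu, hv⟩)
    exact edgeWeight_update_of_notMem hsymm hv _ b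
  · refine Finset.prod_congr rfl fun e he' => ?_
    rw [update_comm huv]
    exact edgeWeight_update_of_notMem hsymm (Finset.mem_filter.1 he').2 _ a

theorem abs_integral_integral_prod_edgeWeight_update_le [DecidableEq V]
    (hmeas : Measurable (uncurry W)) (hb : ∀ x y, |W x y| ≤ C) {s : Finset (Sym2 V)} {u v : V}
    (huv : u ≠ v) (he : s(u, v) ∈ s) (x : V → ℝ) :
    |∫ a, ∫ b, ∏ e ∈ s, edgeWeight W hsymm (update (update x u a) v b) e ∂λI ∂λI|
      ≤ 4 * C ^ (s.card - 1) * cutNorm W := by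
  have hC : 0 ≤ C := (abs_nonneg _).trans (hb 0 0)
  have hcard : ((s.erase s(u, v)).filter (u ∈ ·)).card
      + ((s.erase s(u, v)).filter (u ∉ ·)).card = s.card - 1 := by
    rw [Finset.card_filter_add_card_filter_not, Finset.card_erase_of_mem he]
  simp_rw [prod_edgeWeight_update_update hsymm huv he]
  rw [← hcard, pow_add, ← mul_assoc]
  exact abs_integral_integral_mul_mul_le_cutNorm hmeas hb
    (Finset.measurable_prod _ fun e _ => (measurable_edgeWeight hsymm hmeas e).comp
      (measurable_update x))
    (Finset.measurable_prod _ fun e _ => (measurable_edgeWeight hsymm hmeas e).comp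
      (measurable_update x))
    (pow_nonneg hC _) (pow_nonneg hC _)
    (fun a => abs_prod_edgeWeight_le hsymm hb _ _) (fun b => abs_prod_edgeWeight_le hsymm hb _ _)

end EdgeWeight

theorem homDensity_eq_integral_pi {k : ℕ} (F : SimpleGraph (Fin k)) [DecidableRel F.Adj]
    (W : ℝ → ℝ → ℝ) (hsymm : ∀ x y, W x y = W y x) :
    homDensity F W hsymm
      = ∫ x, ∏ e ∈ F.edgeFinset, edgeWeight W hsymm x e ∂Measure.pi fun _ => λI := by
  rw [homDensity, volume_pi, Measure.restrict_pi_pi]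
  rfl

/-- For a graphon `W` with `‖W‖_∞ ≤ C` and a simple graph `F` with at least one
edge, `|t(F,W)| ≤ 4 C^{|E(F)|−1} ‖W‖_□`. -/
theorem homDensity_le_cutNorm {k : ℕ} (F : SimpleGraph (Fin k)) [DecidableRel F.Adj]
    (hF : F.edgeFinset.Nonempty)
    (W : ℝ → ℝ → ℝ) (hmeas : Measurable (Function.uncurry W))
    (hsymm : ∀ x y, W x y = W y x)
    (C : ℝ) (hb : ∀ x y, |W x y| ≤ C) :
    |homDensity F W hsymm| ≤ 4 * C ^ (F.edgeFinset.card - 1) * cutNorm W := by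
  obtain ⟨⟨u, v⟩, he⟩ := hF
  have huv : u ≠ v := (SimpleGraph.mem_edgeFinset.1 he).ne
  have hint : Integrable (fun x => ∏ e ∈ F.edgeFinset, edgeWeight W hsymm x e)
      (Measure.pi fun _ => λI) :=
    .of_bound (Finset.measurable_prod _ fun e _ =>
      measurable_edgeWeight hsymm hmeas e).aestronglyMeasurable _
      (ae_of_all _ (abs_prod_edgeWeight_le hsymm hb _))
  rw [homDensity_eq_integral_pi, integral_pi_eq_integral_update v hint,
    integral_pi_eq_integral_update u (hint.integral_update v)]
  exact abs_integral_le_of_forall_abs_le fun x =>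
    abs_integral_integral_prod_edgeWeight_update_le hsymm hmeas hb huv he x
end

section
/- Let W be a graphon and P a finite measurable partition of [0,1] into sets of positive measure. Then ‖W − W_P‖_□ ≤ 2 · min over step functions U with steps P of ‖W − U‖_□. -/
/-!
Let `U` be a step function with steps `P` and values `c`, and put `D = W - U`. Replacing `U` by
the canonical step function with values `c` changes nothing on `[0,1]²`; that one is its own
stepping, and stepping is linear, so `W - W_P = D - D_P`. Stepping does not increase the cut norm:
the integral of `D_P` over `S × T` is the bilinear form `∑ α_i β_j ∫_{V_i × V_j} D` in the weights
`α_i = |S ∩ V_i| / |V_i|`, `β_j = |T ∩ V_j| / |V_j|` in `[0,1]`, so its absolute value is dominated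
by its value at a vertex of the cube, which is the integral of `D` over a box made of cells. Hence
`‖W - W_P‖_□ ≤ ‖D‖_□ + ‖D_P‖_□ ≤ 2 ‖D‖_□`.
-/

open MeasureTheory

/-- `V : ι → Set ℝ` is a measurable partition of `[0,1]`. -/
def IsPartition {ι : Type*} (V : ι → Set ℝ) : Prop :=
  (∀ i, MeasurableSet (V i)) ∧ Pairwise (fun i j => Disjoint (V i) (V j)) ∧
    (⋃ i, V i) = Set.Icc (0:ℝ) 1

/-- The stepping `W_P` of a kernel `W` on a finite partition `V`. -/
noncomputable def stepW {ι : Type*} [Fintype ι] (V : ι → Set ℝ) (W : ℝ → ℝ → ℝ)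
    (x y : ℝ) : ℝ :=
  ∑ i, ∑ j,
    Set.indicator (V i) (fun _ => (1:ℝ)) x * Set.indicator (V j) (fun _ => (1:ℝ)) y *
      ((∫ u in V i, ∫ v in V j, W u v) /
        (MeasureTheory.volume (V i)).toReal / (MeasureTheory.volume (V j)).toReal)

/-- `U` is a (symmetric) step function with steps `V`. -/
def IsStepFn {ι : Type*} (V : ι → Set ℝ) (U : ℝ → ℝ → ℝ) : Prop :=
  (∀ x y, U x y = U y x) ∧
    ∃ c : ι → ι → ℝ, ∀ i j, ∀ x ∈ V i, ∀ y ∈ V j, U x y = c i j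

open Finset

lemma sum_mul_le_sum_filter_nonneg {ι : Type*} (s : Finset ι) (α h : ι → ℝ)
    (hα : ∀ i, α i ∈ Set.Icc (0 : ℝ) 1) :
    ∑ i ∈ s, α i * h i ≤ ∑ i ∈ s with 0 ≤ h i, h i := by
  rw [sum_filter]
  refine sum_le_sum fun i _ => ?_
  obtain ⟨h0, h1⟩ := hα i
  split_ifs with hh
  · exact mul_le_of_le_one_left hh h1
  · exact mul_nonpos_of_nonneg_of_nonpos h0 (le_of_not_ge hh)

lemma exists_bilinear_le_sum_sum {ι κ : Type*} [Fintype ι] [Fintype κ] (A : ι → κ → ℝ)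
    (α : ι → ℝ) (β : κ → ℝ) (hα : ∀ i, α i ∈ Set.Icc (0 : ℝ) 1)
    (hβ : ∀ j, β j ∈ Set.Icc (0 : ℝ) 1) :
    ∃ (I : Finset ι) (J : Finset κ), ∑ i, ∑ j, α i * β j * A i j ≤ ∑ i ∈ I, ∑ j ∈ J, A i j := by
  set I : Finset ι := univ.filter fun i => 0 ≤ ∑ j, β j * A i j
  refine ⟨I, univ.filter fun j => 0 ≤ ∑ i ∈ I, A i j, ?_⟩
  calc ∑ i, ∑ j, α i * β j * A i j = ∑ i, α i * ∑ j, β j * A i j := by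
        simp_rw [mul_sum, mul_assoc]
    _ ≤ ∑ i ∈ I, ∑ j, β j * A i j := sum_mul_le_sum_filter_nonneg _ _ _ hα
    _ = ∑ j, β j * ∑ i ∈ I, A i j := by rw [sum_comm]; simp_rw [mul_sum]
    _ ≤ ∑ j with 0 ≤ ∑ i ∈ I, A i j, ∑ i ∈ I, A i j := sum_mul_le_sum_filter_nonneg _ _ _ hβ
    _ = _ := sum_comm

lemma exists_abs_bilinear_le_abs_sum_sum {ι κ : Type*} [Fintype ι] [Fintype κ]
    (A : ι → κ → ℝ) (α : ι → ℝ) (β : κ → ℝ) (hα : ∀ i, α i ∈ Set.Icc (0 : ℝ) 1)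
    (hβ : ∀ j, β j ∈ Set.Icc (0 : ℝ) 1) :
    ∃ (I : Finset ι) (J : Finset κ),
      |∑ i, ∑ j, α i * β j * A i j| ≤ |∑ i ∈ I, ∑ j ∈ J, A i j| := by
  rcases le_total 0 (∑ i, ∑ j, α i * β j * A i j) with h | h
  · obtain ⟨I, J, hIJ⟩ := exists_bilinear_le_sum_sum A α β hα hβ
    exact ⟨I, J, (abs_of_nonneg h).trans_le (hIJ.trans (le_abs_self _))⟩
  · obtain ⟨I, J, hIJ⟩ := exists_bilinear_le_sum_sum (fun i j => -A i j) α β hα hβ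
    refine ⟨I, J, ?_⟩
    simp only [mul_neg, sum_neg_distrib, neg_le_neg_iff] at hIJ
    rw [abs_of_nonpos h]
    exact (neg_le_neg hIJ).trans (neg_le_abs _)

lemma measure_ne_top_of_subset_Icc {S : Set ℝ} (hS : S ⊆ Set.Icc 0 1) : volume S ≠ ⊤ :=
  ((measure_mono hS).trans_lt measure_Icc_lt_top).ne

lemma abs_setIntegral_le_of_subset_Icc_s11 {g : ℝ → ℝ} {M : ℝ} (hg : ∀ y, |g y| ≤ M)
    {T : Set ℝ} (hT : T ⊆ Set.Icc 0 1) : |∫ y in T, g y| ≤ M := by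
  have hM : 0 ≤ M := (abs_nonneg _).trans (hg 0)
  have hvol : volume.real T ≤ 1 := by
    simpa using measureReal_mono (μ := volume) hT (measure_Icc_lt_top (a := (0 : ℝ)) (b := 1)).ne
  calc |∫ y in T, g y| ≤ M * volume.real T :=
        norm_setIntegral_le_of_norm_le_const (f := g) (measure_ne_top_of_subset_Icc hT).lt_top
          fun y _ => hg y
    _ ≤ M := mul_le_of_le_one_right hM hvol

lemma cutNorm_nonneg (f : ℝ → ℝ → ℝ) : 0 ≤ cutNorm f :=
  Real.sSup_nonneg fun _ ⟨_, _, _, _, _, _, hr⟩ => hr ▸ abs_nonneg _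

lemma cutNorm_le_of_forall {f : ℝ → ℝ → ℝ} {c : ℝ} (hc : 0 ≤ c)
    (h : ∀ S T : Set ℝ, MeasurableSet S → MeasurableSet T → S ⊆ Set.Icc 0 1 →
      T ⊆ Set.Icc 0 1 → |∫ x in S, ∫ y in T, f x y| ≤ c) :
    cutNorm f ≤ c :=
  Real.sSup_le (fun _ ⟨S, T, hS, hT, hS', hT', hr⟩ => hr ▸ h S T hS hT hS' hT') hc

lemma cutNorm_congr {f g : ℝ → ℝ → ℝ}
    (h : ∀ x ∈ Set.Icc (0 : ℝ) 1, ∀ y ∈ Set.Icc (0 : ℝ) 1, f x y = g x y) :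
    cutNorm f = cutNorm g := by
  unfold cutNorm
  congr 1
  ext r
  refine exists₂_congr fun S T => ⟨fun ⟨hS, hT, hS', hT', hr⟩ => ⟨hS, hT, hS', hT', ?_⟩,
    fun ⟨hS, hT, hS', hT', hr⟩ => ⟨hS, hT, hS', hT', ?_⟩⟩ <;>
  rw [hr, setIntegral_congr_fun hS fun x hx =>
    setIntegral_congr_fun hT fun y hy => h x (hS' hx) y (hT' hy)]

def IsBddKernel (f : ℝ → ℝ → ℝ) : Prop :=
  Measurable (Function.uncurry f) ∧ ∃ M, ∀ x y, |f x y| ≤ M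

namespace IsBddKernel

variable {f g : ℝ → ℝ → ℝ} {S T : Set ℝ}

lemma sub (hf : IsBddKernel f) (hg : IsBddKernel g) : IsBddKernel fun x y => f x y - g x y := by
  obtain ⟨hfm, M, hM⟩ := hf
  obtain ⟨hgm, N, hN⟩ := hg
  exact ⟨hfm.sub hgm, M + N, fun x y => (abs_sub _ _).trans (add_le_add (hM x y) (hN x y))⟩

lemma integrable_prod (hf : IsBddKernel f) (hS : volume S ≠ ⊤) (hT : volume T ≠ ⊤) :
    Integrable (Function.uncurry f) ((volume.restrict S).prod (volume.restrict T)) := by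
  obtain ⟨hfm, M, hM⟩ := hf
  have := isFiniteMeasure_restrict.mpr hS
  have := isFiniteMeasure_restrict.mpr hT
  exact Integrable.of_bound hfm.aestronglyMeasurable M (Filter.Eventually.of_forall fun p => hM _ _)

lemma integrableOn_right (hf : IsBddKernel f) (x : ℝ) (hT : volume T ≠ ⊤) :
    IntegrableOn (f x) T := by
  obtain ⟨hfm, M, hM⟩ := hf
  exact Measure.integrableOn_of_bounded hT hfm.of_uncurry_left.aestronglyMeasurable
    (Filter.Eventually.of_forall (hM x))

lemma integrableOn_setIntegral (hf : IsBddKernel f) (hS : volume S ≠ ⊤) (hT : volume T ≠ ⊤) :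
    IntegrableOn (fun x => ∫ y in T, f x y) S :=
  (hf.integrable_prod hS hT).integral_prod_left

lemma setIntegral_setIntegral_sub (hf : IsBddKernel f) (hg : IsBddKernel g)
    (hS : volume S ≠ ⊤) (hT : volume T ≠ ⊤) :
    ∫ x in S, ∫ y in T, (f x y - g x y) =
      (∫ x in S, ∫ y in T, f x y) - ∫ x in S, ∫ y in T, g x y :=
  integral_integral_sub (hf.integrable_prod hS hT) (hg.integrable_prod hS hT)

lemma setIntegral_setIntegral_biUnion {ι κ : Type*} (hf : IsBddKernel f) {V : ι → Set ℝ}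
    {V' : κ → Set ℝ} (hV : ∀ i, MeasurableSet (V i)) (hV' : ∀ j, MeasurableSet (V' j))
    (hdisj : Pairwise fun i j => Disjoint (V i) (V j))
    (hdisj' : Pairwise fun i j => Disjoint (V' i) (V' j))
    (hfin : ∀ i, volume (V i) ≠ ⊤) (hfin' : ∀ j, volume (V' j) ≠ ⊤)
    (I : Finset ι) (J : Finset κ) :
    ∫ x in ⋃ i ∈ I, V i, ∫ y in ⋃ j ∈ J, V' j, f x y =
      ∑ i ∈ I, ∑ j ∈ J, ∫ x in V i, ∫ y in V' j, f x y := by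
  have hinner : ∀ x, ∫ y in ⋃ j ∈ J, V' j, f x y = ∑ j ∈ J, ∫ y in V' j, f x y := fun x =>
    integral_biUnion_finset J (fun j _ => hV' j) (hdisj'.set_pairwise _)
      fun j _ => hf.integrableOn_right x (hfin' j)
  simp_rw [hinner]
  rw [integral_biUnion_finset I (fun i _ => hV i) (hdisj.set_pairwise _) fun i _ =>
    integrable_finsetSum _ fun j _ => hf.integrableOn_setIntegral (hfin i) (hfin' j)]
  exact sum_congr rfl fun i _ =>
    integral_finsetSum _ fun j _ => hf.integrableOn_setIntegral (hfin i) (hfin' j)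

lemma abs_setIntegral_setIntegral_le_cutNorm (hf : IsBddKernel f) {S T : Set ℝ}
    (hS : MeasurableSet S) (hT : MeasurableSet T) (hS' : S ⊆ Set.Icc 0 1)
    (hT' : T ⊆ Set.Icc 0 1) : |∫ x in S, ∫ y in T, f x y| ≤ cutNorm f := by
  obtain ⟨-, M, hM⟩ := hf
  have hbound : ∀ S T : Set ℝ, S ⊆ Set.Icc 0 1 → T ⊆ Set.Icc 0 1 →
      |∫ x in S, ∫ y in T, f x y| ≤ M := fun S T hS hT =>
    abs_setIntegral_le_of_subset_Icc_s11 (fun x => abs_setIntegral_le_of_subset_Icc_s11 (hM x) hT) hS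
  exact le_csSup ⟨M, fun _ ⟨S, T, _, _, hS, hT, hr⟩ => hr ▸ hbound S T hS hT⟩
    ⟨S, T, hS, hT, hS', hT', rfl⟩

lemma cutNorm_sub_le (hf : IsBddKernel f) (hg : IsBddKernel g) :
    cutNorm (fun x y => f x y - g x y) ≤ cutNorm f + cutNorm g :=
  cutNorm_le_of_forall (add_nonneg (cutNorm_nonneg f) (cutNorm_nonneg g))
    fun S T hS hT hS' hT' => by
      rw [hf.setIntegral_setIntegral_sub hg (measure_ne_top_of_subset_Icc hS')
        (measure_ne_top_of_subset_Icc hT')]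
      exact (abs_sub _ _).trans (add_le_add
        (hf.abs_setIntegral_setIntegral_le_cutNorm hS hT hS' hT')
        (hg.abs_setIntegral_setIntegral_le_cutNorm hS hT hS' hT'))

end IsBddKernel

noncomputable def cellAverage {ι : Type*} (V : ι → Set ℝ) (f : ℝ → ℝ → ℝ) (i j : ι) : ℝ :=
  (∫ u in V i, ∫ v in V j, f u v) / volume.real (V i) / volume.real (V j)

lemma cellAverage_sub {ι : Type*} {V : ι → Set ℝ} {f g : ℝ → ℝ → ℝ} (hf : IsBddKernel f)
    (hg : IsBddKernel g) (hfin : ∀ i, volume (V i) ≠ ⊤) :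
    cellAverage V (fun x y => f x y - g x y) = cellAverage V f - cellAverage V g := by
  ext i j
  rw [cellAverage, hf.setIntegral_setIntegral_sub hg (hfin i) (hfin j)]
  simp only [cellAverage, Pi.sub_apply, sub_div]

lemma integrableOn_indicator_one_mul {s R : Set ℝ} (hs : MeasurableSet s) (hR : volume R ≠ ⊤)
    (a b : ℝ) : IntegrableOn (fun y => a * s.indicator 1 y * b) R :=
  (Integrable.const_mul ((integrableOn_const (C := (1 : ℝ)) hR).indicator hs) a).mul_const b

lemma setIntegral_indicator_one_mul {s R : Set ℝ} (hs : MeasurableSet s) (a b : ℝ) :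
    ∫ y in R, a * s.indicator 1 y * b = a * volume.real (s ∩ R) * b := by
  rw [integral_mul_const, integral_const_mul, integral_indicator_one hs,
    measureReal_restrict_apply hs]

section StepKernel

variable {ι : Type*} [Fintype ι] {V : ι → Set ℝ}

noncomputable def stepKernel (V : ι → Set ℝ) (c : ι → ι → ℝ) (x y : ℝ) : ℝ :=
  ∑ i, ∑ j, (V i).indicator 1 x * (V j).indicator 1 y * c i j

lemma stepW_eq_stepKernel (f : ℝ → ℝ → ℝ) : stepW V f = stepKernel V (cellAverage V f) := rfl

lemma stepKernel_sub (c d : ι → ι → ℝ) (x y : ℝ) :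
    stepKernel V c x y - stepKernel V d x y = stepKernel V (c - d) x y := by
  simp only [stepKernel, Pi.sub_apply, mul_sub, sum_sub_distrib]

lemma stepKernel_apply_of_mem (hdisj : Pairwise fun i j => Disjoint (V i) (V j))
    (c : ι → ι → ℝ) {i j : ι} {x y : ℝ} (hx : x ∈ V i) (hy : y ∈ V j) :
    stepKernel V c x y = c i j := by
  classical
  have hind : ∀ {z : ℝ} {k : ι}, z ∈ V k → ∀ l,
      (V l).indicator (1 : ℝ → ℝ) z = if k = l then 1 else 0 := by
    intro z k hz l
    split_ifs with hkl
    · exact Set.indicator_of_mem (hkl ▸ hz) _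
    · exact Set.indicator_of_notMem (Set.disjoint_left.mp (hdisj hkl) hz) _
  simp [stepKernel, hind hx, hind hy]

lemma isBddKernel_stepKernel (hV : ∀ i, MeasurableSet (V i)) (c : ι → ι → ℝ) :
    IsBddKernel (stepKernel V c) := by
  have hind : ∀ i z, |(V i).indicator (1 : ℝ → ℝ) z| ≤ 1 := fun i z => by
    by_cases hz : z ∈ V i <;> simp [hz]
  refine ⟨Finset.measurable_sum _ fun i _ => Finset.measurable_sum _ fun j _ => ?_,
    ∑ i, ∑ j, |c i j|, fun x y => ?_⟩
  · exact ((measurable_one.indicator (hV i)).comp measurable_fst).mul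
      ((measurable_one.indicator (hV j)).comp measurable_snd) |>.mul_const _
  calc |stepKernel V c x y|
      ≤ ∑ i, ∑ j, |(V i).indicator 1 x * (V j).indicator 1 y * c i j| :=
        (abs_sum_le_sum_abs _ _).trans (sum_le_sum fun i _ => abs_sum_le_sum_abs _ _)
    _ ≤ ∑ i, ∑ j, |c i j| := by
        refine sum_le_sum fun i _ => sum_le_sum fun j _ => ?_
        rw [abs_mul, abs_mul]
        exact mul_le_of_le_one_left (abs_nonneg _)
          (mul_le_one₀ (hind i x) (abs_nonneg _) (hind j y))

lemma setIntegral_setIntegral_stepKernel (hV : ∀ i, MeasurableSet (V i)) (c : ι → ι → ℝ)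
    {S T : Set ℝ} (hS : volume S ≠ ⊤) (hT : volume T ≠ ⊤) :
    ∫ x in S, ∫ y in T, stepKernel V c x y =
      ∑ i, ∑ j, volume.real (V i ∩ S) * volume.real (V j ∩ T) * c i j := by
  -- the factor `1 *` puts the outer integrands in the shape of `setIntegral_indicator_one_mul`
  have hinner : ∀ x, ∫ y in T, stepKernel V c x y =
      ∑ i, ∑ j, 1 * (V i).indicator 1 x * (volume.real (V j ∩ T) * c i j) := fun x => by
    unfold stepKernel
    rw [integral_finsetSum _ fun i _ => integrable_finsetSum _ fun j _ =>
      integrableOn_indicator_one_mul (hV j) hT _ _]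
    refine sum_congr rfl fun i _ => ?_
    rw [integral_finsetSum _ fun j _ => integrableOn_indicator_one_mul (hV j) hT _ _]
    refine sum_congr rfl fun j _ => ?_
    rw [setIntegral_indicator_one_mul (hV j)]
    ring
  simp_rw [hinner]
  rw [integral_finsetSum _ fun i _ => integrable_finsetSum _ fun j _ =>
    integrableOn_indicator_one_mul (hV i) hS _ _]
  refine sum_congr rfl fun i _ => ?_
  rw [integral_finsetSum _ fun j _ => integrableOn_indicator_one_mul (hV i) hS _ _]
  refine sum_congr rfl fun j _ => ?_
  rw [setIntegral_indicator_one_mul (hV i)]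
  ring

lemma cellAverage_stepKernel (hdisj : Pairwise fun i j => Disjoint (V i) (V j))
    (hV : ∀ i, MeasurableSet (V i)) (hpos : ∀ i, volume.real (V i) ≠ 0) (c : ι → ι → ℝ) :
    cellAverage V (stepKernel V c) = c := by
  ext i j
  have hconst : ∫ x in V i, ∫ y in V j, stepKernel V c x y =
      ∫ _ in V i, ∫ _ in V j, c i j :=
    setIntegral_congr_fun (hV i) fun x hx => setIntegral_congr_fun (hV j) fun y hy =>
      stepKernel_apply_of_mem hdisj c hx hy
  rw [cellAverage, hconst, setIntegral_const, setIntegral_const, smul_eq_mul, smul_eq_mul]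
  field_simp [hpos i, hpos j]

lemma stepW_sub_stepKernel {W : ℝ → ℝ → ℝ} (hW : IsBddKernel W)
    (hdisj : Pairwise fun i j => Disjoint (V i) (V j)) (hV : ∀ i, MeasurableSet (V i))
    (hfin : ∀ i, volume (V i) ≠ ⊤) (hpos : ∀ i, volume.real (V i) ≠ 0) (c : ι → ι → ℝ)
    (x y : ℝ) :
    stepW V (fun x y => W x y - stepKernel V c x y) x y = stepW V W x y - stepKernel V c x y := by
  rw [stepW_eq_stepKernel, stepW_eq_stepKernel,
    cellAverage_sub hW (isBddKernel_stepKernel hV c) hfin,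
    cellAverage_stepKernel hdisj hV hpos, stepKernel_sub]

end StepKernel

namespace IsPartition

variable {ι : Type*} {V : ι → Set ℝ}

lemma subset_Icc (hP : IsPartition V) (i : ι) : V i ⊆ Set.Icc 0 1 :=
  hP.2.2 ▸ Set.subset_iUnion V i

lemma measure_ne_top (hP : IsPartition V) (i : ι) : volume (V i) ≠ ⊤ :=
  measure_ne_top_of_subset_Icc (hP.subset_Icc i)

lemma biUnion_subset_Icc (hP : IsPartition V) (I : Finset ι) : (⋃ i ∈ I, V i) ⊆ Set.Icc 0 1 :=
  Set.iUnion₂_subset fun i _ => hP.subset_Icc i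

lemma measurableSet_biUnion (hP : IsPartition V) (I : Finset ι) :
    MeasurableSet (⋃ i ∈ I, V i) :=
  I.measurableSet_biUnion fun i _ => hP.1 i

lemma stepKernel_eq [Fintype ι] (hP : IsPartition V) {U : ℝ → ℝ → ℝ} {c : ι → ι → ℝ}
    (hc : ∀ i j, ∀ x ∈ V i, ∀ y ∈ V j, U x y = c i j) {x y : ℝ}
    (hx : x ∈ Set.Icc (0 : ℝ) 1) (hy : y ∈ Set.Icc (0 : ℝ) 1) : stepKernel V c x y = U x y := by
  rw [← hP.2.2, Set.mem_iUnion] at hx hy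
  obtain ⟨⟨i, hi⟩, ⟨j, hj⟩⟩ := And.intro hx hy
  rw [stepKernel_apply_of_mem hP.2.1 c hi hj, hc i j x hi y hj]

lemma cutNorm_stepW_le [Fintype ι] (hP : IsPartition V) {f : ℝ → ℝ → ℝ} (hf : IsBddKernel f) :
    cutNorm (stepW V f) ≤ cutNorm f := by
  refine cutNorm_le_of_forall (cutNorm_nonneg f) fun S T hS hT hS' hT' => ?_
  set A : ι → ι → ℝ := fun i j => ∫ x in V i, ∫ y in V j, f x y
  have hweight : ∀ R : Set ℝ, ∀ i, volume.real (V i ∩ R) / volume.real (V i) ∈ Set.Icc (0 : ℝ) 1 :=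
    fun R i => ⟨by positivity,
      div_le_one_of_le₀ (measureReal_mono Set.inter_subset_left (hP.measure_ne_top i))
        measureReal_nonneg⟩
  obtain ⟨I, J, hIJ⟩ := exists_abs_bilinear_le_abs_sum_sum A _ _ (hweight S) (hweight T)
  calc |∫ x in S, ∫ y in T, stepW V f x y|
      = |∑ i, ∑ j, volume.real (V i ∩ S) / volume.real (V i) *
          (volume.real (V j ∩ T) / volume.real (V j)) * A i j| := by
        rw [stepW_eq_stepKernel, setIntegral_setIntegral_stepKernel hP.1 _
          (measure_ne_top_of_subset_Icc hS') (measure_ne_top_of_subset_Icc hT')]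
        congr 1
        refine sum_congr rfl fun i _ => sum_congr rfl fun j _ => ?_
        simp only [cellAverage, A]
        ring
    _ ≤ |∑ i ∈ I, ∑ j ∈ J, A i j| := hIJ
    _ = |∫ x in ⋃ i ∈ I, V i, ∫ y in ⋃ j ∈ J, V j, f x y| := by
        rw [hf.setIntegral_setIntegral_biUnion hP.1 hP.1 hP.2.1 hP.2.1 hP.measure_ne_top
          hP.measure_ne_top]
    _ ≤ cutNorm f := hf.abs_setIntegral_setIntegral_le_cutNorm (hP.measurableSet_biUnion I)
        (hP.measurableSet_biUnion J) (hP.biUnion_subset_Icc I) (hP.biUnion_subset_Icc J)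

end IsPartition

theorem stepping_two_approximation_general {ι : Type*} [Fintype ι] (W : ℝ → ℝ → ℝ)
    (hmeas : Measurable (Function.uncurry W))
    (hbdd : ∃ C : ℝ, ∀ x y, |W x y| ≤ C)
    (V : ι → Set ℝ) (hP : IsPartition V)
    (hpos : ∀ i, 0 < MeasureTheory.volume (V i)) :
    ∀ U : ℝ → ℝ → ℝ, IsStepFn V U →
      cutNorm (fun x y => W x y - stepW V W x y) ≤
        2 * cutNorm (fun x y => W x y - U x y) := by
  rintro U ⟨-, c, hc⟩
  have hW : IsBddKernel W := ⟨hmeas, hbdd⟩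
  set D := fun x y => W x y - stepKernel V c x y
  have hD : IsBddKernel D := hW.sub (isBddKernel_stepKernel hP.1 c)
  have hpos' : ∀ i, volume.real (V i) ≠ 0 := fun i =>
    (measureReal_ne_zero_iff (hP.measure_ne_top i)).mpr (hpos i).ne'
  have hdiff : (fun x y => W x y - stepW V W x y) = fun x y => D x y - stepW V D x y := by
    ext x y
    rw [stepW_sub_stepKernel hW hP.2.1 hP.1 hP.measure_ne_top hpos']
    ring
  have hU : cutNorm (fun x y => W x y - U x y) = cutNorm D :=
    cutNorm_congr fun x hx y hy => by rw [← hP.stepKernel_eq hc hx hy]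
  calc cutNorm (fun x y => W x y - stepW V W x y)
      = cutNorm (fun x y => D x y - stepW V D x y) := by rw [hdiff]
    _ ≤ cutNorm D + cutNorm (stepW V D) := hD.cutNorm_sub_le (isBddKernel_stepKernel hP.1 _)
    _ ≤ 2 * cutNorm D := by linarith [hP.cutNorm_stepW_le hD]
    _ = 2 * cutNorm (fun x y => W x y - U x y) := by rw [hU]

/-- `‖W − W_P‖_□ ≤ 2 ‖W − U‖_□` for every step function `U` with steps `P`;
i.e. `W_P` approximates `W` in the cut norm within a factor two of the best
step-function approximation. -/
theorem stepping_two_approximation {ι : Type*} [Fintype ι] (W : ℝ → ℝ → ℝ)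
    (hmeas : Measurable (Function.uncurry W)) (hsymm : ∀ x y, W x y = W y x)
    (hbdd : ∃ C : ℝ, ∀ x y, |W x y| ≤ C)
    (V : ι → Set ℝ) (hP : IsPartition V)
    (hpos : ∀ i, 0 < MeasureTheory.volume (V i)) :
    ∀ U : ℝ → ℝ → ℝ, IsStepFn V U →
      cutNorm (fun x y => W x y - stepW V W x y) ≤
        2 * cutNorm (fun x y => W x y - U x y) :=
  stepping_two_approximation_general W hmeas hbdd V hP hpos
end

section
/- Let G be a weighted graph on n nodes with node weights 1 and edge weights in [0,1], and let 𝐆(G) be the random simple graph on the same vertex set obtained by including each edge ij (i ≠ j) independently with probability β_{ij}(G). Then with probability greater than 1 − 2^{−n}, the labeled cut distance satisfies d_□(G, 𝐆(G)) < 4/√n. -/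
open MeasureTheory

/-- The probability space for random graphs on `[n]`: one independent uniform
`[0,1]` variable per unordered pair of vertices. -/
noncomputable def edgeSpace (n : ℕ) : Measure (Sym2 (Fin n) → ℝ) :=
  Measure.pi fun _ => volume.restrict (Set.Icc (0:ℝ) 1)

/-- The (0-1 valued) adjacency matrix of the random graph `𝐆(G)`: the edge `ij`
(`i ≠ j`) is present iff the uniform variable attached to `{i,j}` is below the
edge weight `β i j`; loops are ignored. -/
noncomputable def randAdj (n : ℕ) (β : Fin n → Fin n → ℝ)
    (ω : Sym2 (Fin n) → ℝ) : Fin n → Fin n → ℝ :=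
  fun i j => if i ≠ j ∧ ω s(i, j) ≤ β i j then 1 else 0

/-- The labeled cut distance of two weighted graphs on `[n]` with node
weights `1`: `d_□(A,B) = max_{S,T ⊆ [n]} |e_A(S,T) − e_B(S,T)|/n²`. -/
noncomputable def dcut (n : ℕ) (A B : Fin n → Fin n → ℝ) : ℝ :=
  ⨆ S : Finset (Fin n), ⨆ T : Finset (Fin n),
    |∑ i ∈ S, ∑ j ∈ T, (A i j - B i j)| / (n : ℝ) ^ 2

/-!
Write `∑_{i ∈ S, j ∈ T} (β i j - A i j)` for the adjacency matrix `A` of `𝐆(G)` as a diagonal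
part, of absolute value at most `n` because `𝐆(G)` has no loops, plus a sum over unordered pairs
`e` of independent centred variables `edgeDeviation β S T e (ω e)`. The pair `e` is hit by at
most two ordered pairs of `S × T`, so each of these variables ranges over an interval of length
`2`, and Hoeffding's inequality bounds the probability that the sum exceeds `3 n √n` by
`2 exp (-9n/2)`. A union bound over the `4 ^ n` choices of `(S, T)` leaves probability below
`2 ^ (-n)`, and off this event every cut discrepancy is below `n + 3 n √n ≤ (4 / √n) n²`.
-/

open ProbabilityTheory Real Finset

namespace ProbabilityTheory

theorem HasSubgaussianMGF.measureReal_abs_ge_le {Ω : Type*} {m : MeasurableSpace Ω}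
    {μ : Measure Ω} [IsFiniteMeasure μ] {X : Ω → ℝ} {c : NNReal} (h : HasSubgaussianMGF X c μ)
    {ε : ℝ} (hε : 0 ≤ ε) : μ.real {ω | ε ≤ |X ω|} ≤ 2 * exp (-ε ^ 2 / (2 * c)) := by
  have hsplit : {ω | ε ≤ |X ω|} ⊆ {ω | ε ≤ X ω} ∪ {ω | ε ≤ (-X) ω} := by
    intro ω (hω : ε ≤ |X ω|)
    rcases le_abs'.1 hω with h | h
    · exact Or.inr (le_neg_of_le_neg h)
    · exact Or.inl h
  calc μ.real {ω | ε ≤ |X ω|} ≤ μ.real {ω | ε ≤ X ω} + μ.real {ω | ε ≤ (-X) ω} :=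
        (measureReal_mono hsplit).trans (measureReal_union_le _ _)
    _ ≤ 2 * exp (-ε ^ 2 / (2 * c)) := by
        linarith [h.measure_ge_le hε, h.neg.measure_ge_le hε]

theorem measureReal_pi_abs_sum_ge_le {ι : Type*} [Fintype ι] {Ω : ι → Type*}
    [∀ i, MeasurableSpace (Ω i)] {ν : ∀ i, Measure (Ω i)} [∀ i, IsProbabilityMeasure (ν i)]
    {f : ∀ i, Ω i → ℝ} (hf : ∀ i, AEMeasurable (f i) (ν i)) {a b : ι → ℝ}
    (hab : ∀ i, ∀ᵐ x ∂ν i, f i x ∈ Set.Icc (a i) (b i)) (h0 : ∀ i, ∫ x, f i x ∂ν i = 0)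
    {ε : ℝ} (hε : 0 ≤ ε) :
    (Measure.pi ν).real {ω | ε ≤ |∑ i, f i (ω i)|}
      ≤ 2 * exp (-2 * ε ^ 2 / ∑ i, (b i - a i) ^ 2) := by
  have hsub : ∀ i, HasSubgaussianMGF (fun ω : ∀ i, Ω i => f i (ω i))
      ((‖b i - a i‖₊ / 2) ^ 2) (Measure.pi ν) := fun i =>
    .of_map (X := f i) (measurable_pi_apply i).aemeasurable <| by
      rw [(measurePreserving_eval ν i).map_eq]
      exact hasSubgaussianMGF_of_mem_Icc_of_integral_eq_zero (hf i) (hab i) (h0 i)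
  have hsum := HasSubgaussianMGF.sum_of_iIndepFun (iIndepFun_pi hf) (s := univ)
    fun i _ => hsub i
  convert hsum.measureReal_abs_ge_le hε using 3
  push_cast
  simp only [Real.norm_eq_abs, div_pow, sq_abs, ← sum_div]
  field_simp

end ProbabilityTheory

theorem MeasureTheory.one_sub_lt_measure_of_compl_subset {Ω : Type*} {m : MeasurableSpace Ω}
    {μ : Measure Ω} [IsProbabilityMeasure μ] {s t : Set Ω} (hts : tᶜ ⊆ s) {r : ENNReal}
    (hr : r ≤ 1) (ht : μ t < r) : 1 - r < μ s :=
  calc 1 - r < 1 - μ t := (ENNReal.cancel_of_ne (ENNReal.sub_ne_top ENNReal.one_ne_top)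
        |>.tsub_lt_tsub_left_of_le) hr ht
    _ ≤ μ tᶜ := tsub_le_iff_left.2 <| by
        simpa [Set.union_compl_self] using measure_union_le (μ := μ) t tᶜ
    _ ≤ μ s := measure_mono hts

theorem Sym2.card_filter_mk_eq_le_two {α : Type*} [DecidableEq α] (s : Finset (α × α))
    (e : Sym2 α) : #(s.filter fun p => s(p.1, p.2) = e) ≤ 2 := by
  induction e using Sym2.ind with
  | _ a b =>
    calc #(s.filter fun p => s(p.1, p.2) = s(a, b)) ≤ #{(a, b), (b, a)} := by
          refine card_le_card fun p hp => ?_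
          rcases Sym2.eq_iff.1 (mem_filter.1 hp).2 with ⟨h1, h2⟩ | ⟨h1, h2⟩ <;>
            simp [Prod.ext_iff, h1, h2]
      _ ≤ 2 := card_le_two

instance : IsProbabilityMeasure (volume.restrict (Set.Icc (0 : ℝ) 1)) :=
  ⟨by simp⟩

theorem integral_ite_le_restrict_Icc {b : ℝ} (hb : b ∈ Set.Icc (0 : ℝ) 1) :
    ∫ x, (if x ≤ b then (1 : ℝ) else 0) ∂(volume.restrict (Set.Icc 0 1)) = b := by
  have hind : (fun x : ℝ => if x ≤ b then (1 : ℝ) else 0) = (Set.Iic b).indicator 1 := by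
    ext x; simp [Set.indicator]
  have hinter : Set.Iic b ∩ Set.Icc 0 1 = Set.Icc 0 b := by
    ext x; simp only [Set.mem_inter_iff, Set.mem_Iic, Set.mem_Icc] at hb ⊢; grind
  rw [hind, integral_indicator_one measurableSet_Iic, measureReal_restrict_apply measurableSet_Iic,
    hinter, Real.volume_real_Icc_of_le hb.1, sub_zero]

theorem two_mul_eight_pow_lt_exp {n : ℕ} (hn : 0 < n) : 2 * (8 : ℝ) ^ n < exp (9 / 2 * n) := by
  have h16 : (16 : ℝ) < exp 4 := by
    have := pow_lt_pow_left₀ (Real.add_one_lt_exp one_ne_zero) (by norm_num) four_ne_zero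
    rw [← exp_nat_mul] at this
    norm_num at this
    exact this
  calc 2 * (8 : ℝ) ^ n ≤ 2 ^ n * 8 ^ n := by gcongr; exact le_self_pow₀ one_le_two hn.ne'
    _ = 16 ^ n := by rw [← mul_pow]; norm_num
    _ < exp 4 ^ n := pow_lt_pow_left₀ h16 (by norm_num) hn.ne'
    _ = exp (4 * n) := by rw [← exp_nat_mul, mul_comm]
    _ ≤ exp (9 / 2 * n) := by gcongr; norm_num

theorem four_pow_mul_two_mul_exp_lt {n : ℕ} (hn : 0 < n) :
    (4 : ℝ) ^ n * (2 * exp (-(9 / 2) * n)) < 2⁻¹ ^ n := by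
  rw [inv_pow, ← one_div, lt_div_iff₀ (by positivity)]
  calc (4 : ℝ) ^ n * (2 * exp (-(9 / 2) * n)) * 2 ^ n = 2 * 8 ^ n * exp (-(9 / 2) * n) := by
        rw [show (8 : ℝ) = 4 * 2 by norm_num, mul_pow]; ring
    _ < exp (9 / 2 * n) * exp (-(9 / 2) * n) := by gcongr; exact two_mul_eight_pow_lt_exp hn
    _ = 1 := by rw [← exp_add]; ring_nf; exact exp_zero

theorem dcut_lt_of_forall {n : ℕ} {A B : Fin n → Fin n → ℝ} {c : ℝ}
    (h : ∀ S T, |∑ i ∈ S, ∑ j ∈ T, (A i j - B i j)| / (n : ℝ) ^ 2 < c) : dcut n A B < c := by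
  obtain ⟨S, hS⟩ := exists_eq_ciSup_of_finite (f := fun S : Finset (Fin n) =>
    ⨆ T : Finset (Fin n), |∑ i ∈ S, ∑ j ∈ T, (A i j - B i j)| / (n : ℝ) ^ 2)
  obtain ⟨T, hT⟩ := exists_eq_ciSup_of_finite (f := fun T : Finset (Fin n) =>
    |∑ i ∈ S, ∑ j ∈ T, (A i j - B i j)| / (n : ℝ) ^ 2)
  rw [dcut, ← hS, ← hT]
  exact h S T

instance (n : ℕ) : IsProbabilityMeasure (edgeSpace n) := by
  unfold edgeSpace; infer_instance

section RandomGraph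

variable {n : ℕ}

noncomputable def pairDeviation (β : Fin n → Fin n → ℝ) (i j : Fin n) (x : ℝ) : ℝ :=
  if i ≠ j then β i j - if x ≤ β i j then 1 else 0 else 0

noncomputable def edgeDeviation (β : Fin n → Fin n → ℝ) (S T : Finset (Fin n))
    (e : Sym2 (Fin n)) (x : ℝ) : ℝ :=
  ∑ p ∈ (S ×ˢ T).filter (fun p => s(p.1, p.2) = e), pairDeviation β p.1 p.2 x

variable {β : Fin n → Fin n → ℝ}

theorem sub_randAdj_eq (ω : Sym2 (Fin n) → ℝ) (i j : Fin n) :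
    β i j - randAdj n β ω i j
      = (if i = j then β i j else 0) + pairDeviation β i j (ω s(i, j)) := by
  by_cases hij : i = j <;> by_cases hω : ω s(i, j) ≤ β i j <;>
    simp [randAdj, pairDeviation, hij, hω]

theorem sum_sub_randAdj_eq (ω : Sym2 (Fin n) → ℝ) (S T : Finset (Fin n)) :
    ∑ i ∈ S, ∑ j ∈ T, (β i j - randAdj n β ω i j)
      = ∑ i ∈ S, (if i ∈ T then β i i else 0) + ∑ e, edgeDeviation β S T e (ω e) := by
  simp only [sub_randAdj_eq, sum_add_distrib, sum_ite_eq, edgeDeviation]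
  rw [← sum_product' (f := fun i j => pairDeviation β i j (ω s(i, j))),
    ← sum_fiberwise (S ×ˢ T) (fun p => s(p.1, p.2))]
  refine congrArg _ (sum_congr rfl fun e _ => sum_congr rfl fun p hp => ?_)
  rw [(mem_filter.1 hp).2]

theorem abs_sum_diagonal_le (hβ : ∀ i j, β i j ∈ Set.Icc 0 1) (S T : Finset (Fin n)) :
    |∑ i ∈ S, (if i ∈ T then β i i else 0)| ≤ n := by
  calc |∑ i ∈ S, (if i ∈ T then β i i else 0)| ≤ ∑ i ∈ S, |if i ∈ T then β i i else 0| :=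
        abs_sum_le_sum_abs _ _
    _ ≤ ∑ _i ∈ S, (1 : ℝ) := sum_le_sum fun i _ => by
        split_ifs <;> simp [abs_of_nonneg (hβ i i).1, (hβ i i).2]
    _ ≤ n := by simpa using card_le_univ S

theorem pairDeviation_mem_Icc {i j : Fin n} (hβij : β i j ∈ Set.Icc 0 1) (x : ℝ) :
    pairDeviation β i j x ∈ Set.Icc (β i j - 1) (β i j) := by
  obtain ⟨h0, h1⟩ := hβij
  unfold pairDeviation
  split_ifs <;> constructor <;> linarith

theorem measurable_pairDeviation (i j : Fin n) : Measurable (pairDeviation β i j) := by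
  unfold pairDeviation
  split_ifs
  · exact measurable_const.sub (measurable_const.ite measurableSet_Iic measurable_const)
  · exact measurable_const

theorem integral_pairDeviation {i j : Fin n} (hβij : β i j ∈ Set.Icc 0 1) :
    ∫ x, pairDeviation β i j x ∂(volume.restrict (Set.Icc 0 1)) = 0 := by
  unfold pairDeviation
  split_ifs
  · rw [integral_sub (integrable_const _) ?_, integral_ite_le_restrict_Icc hβij]
    · simp
    exact Integrable.of_mem_Icc 0 1
      (measurable_const.ite measurableSet_Iic measurable_const).aemeasurable
      (ae_of_all _ fun x => by split_ifs <;> simp)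
  · simp

theorem edgeDeviation_mem_Icc (hβ : ∀ i j, β i j ∈ Set.Icc 0 1) (S T : Finset (Fin n))
    (e : Sym2 (Fin n)) (x : ℝ) :
    edgeDeviation β S T e x ∈ Set.Icc
      (∑ p ∈ (S ×ˢ T).filter (fun p => s(p.1, p.2) = e), β p.1 p.2 - 2)
      (∑ p ∈ (S ×ˢ T).filter (fun p => s(p.1, p.2) = e), β p.1 p.2) := by
  have hcard : (#((S ×ˢ T).filter fun p => s(p.1, p.2) = e) : ℝ) ≤ 2 := by
    exact_mod_cast Sym2.card_filter_mk_eq_le_two _ e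
  constructor
  · calc _ ≤ ∑ p ∈ (S ×ˢ T).filter (fun p => s(p.1, p.2) = e), (β p.1 p.2 - 1) := by
          rw [sum_sub_distrib, sum_const, nsmul_one]; linarith
      _ ≤ _ := sum_le_sum fun p _ => (pairDeviation_mem_Icc (hβ _ _) x).1
  · exact sum_le_sum fun p _ => (pairDeviation_mem_Icc (hβ _ _) x).2

theorem integral_edgeDeviation (hβ : ∀ i j, β i j ∈ Set.Icc 0 1) (S T : Finset (Fin n))
    (e : Sym2 (Fin n)) : ∫ x, edgeDeviation β S T e x ∂(volume.restrict (Set.Icc 0 1)) = 0 := by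
  unfold edgeDeviation
  rw [integral_finsetSum]
  · exact sum_eq_zero fun p _ => integral_pairDeviation (hβ _ _)
  · exact fun p _ => Integrable.of_mem_Icc _ _ (measurable_pairDeviation _ _).aemeasurable
      (ae_of_all _ (pairDeviation_mem_Icc (hβ _ _)))

theorem edgeSpace_real_abs_sum_edgeDeviation_ge_le (hβ : ∀ i j, β i j ∈ Set.Icc 0 1)
    (S T : Finset (Fin n)) {ε : ℝ} (hε : 0 ≤ ε) :
    (edgeSpace n).real {ω | ε ≤ |∑ e, edgeDeviation β S T e (ω e)|}
      ≤ 2 * exp (-ε ^ 2 / (2 * Fintype.card (Sym2 (Fin n)))) := by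
  refine (measureReal_pi_abs_sum_ge_le (f := fun e => edgeDeviation β S T e)
    (fun e => (Finset.measurable_sum _ fun p _ => measurable_pairDeviation _ _).aemeasurable)
    (fun e => ae_of_all _ (edgeDeviation_mem_Icc hβ S T e)) (integral_edgeDeviation hβ S T)
    hε).trans_eq ?_
  simp only [sub_sub_cancel, sum_const, card_univ, nsmul_eq_mul]
  congr 2
  ring

theorem edgeSpace_real_abs_sum_edgeDeviation_ge_three_mul_le (hn : 0 < n)
    (hβ : ∀ i j, β i j ∈ Set.Icc 0 1) (S T : Finset (Fin n)) :
    (edgeSpace n).real {ω | 3 * n * √n ≤ |∑ e, edgeDeviation β S T e (ω e)|}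
      ≤ 2 * exp (-(9 / 2) * n) := by
  refine (edgeSpace_real_abs_sum_edgeDeviation_ge_le hβ S T (by positivity)).trans ?_
  have hn' : (0 : ℝ) < n := by exact_mod_cast hn
  have hcard : (Fintype.card (Sym2 (Fin n)) : ℝ) ≤ n ^ 2 := by
    have := Fintype.card_le_of_surjective _ Sym2.mk_surjective (α := Fin n × Fin n)
    simp only [Fintype.card_prod, Fintype.card_fin] at this
    exact_mod_cast this.trans_eq (sq n).symm
  have hcard₀ : (0 : ℝ) < Fintype.card (Sym2 (Fin n)) := by
    exact_mod_cast Fintype.card_pos_iff.2 ⟨(s(⟨0, hn⟩, ⟨0, hn⟩) : Sym2 (Fin n))⟩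
  have hsq : (3 * n * √n : ℝ) ^ 2 = 9 * n ^ 3 := by
    rw [mul_pow, Real.sq_sqrt hn'.le]; ring
  gcongr
  rw [hsq, neg_div, neg_mul, neg_le_neg_iff, le_div_iff₀ (by positivity)]
  nlinarith [mul_le_mul_of_nonneg_left hcard hn'.le]

theorem dcut_randAdj_lt (hn : 0 < n) (hβ : ∀ i j, β i j ∈ Set.Icc 0 1) (ω : Sym2 (Fin n) → ℝ)
    (h : ∀ S T, |∑ e, edgeDeviation β S T e (ω e)| < 3 * n * √n) :
    dcut n β (randAdj n β ω) < 4 / √n := by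
  have hn' : (0 : ℝ) < n := by exact_mod_cast hn
  have hsqrt : 1 ≤ √n := by simpa using Real.sqrt_le_sqrt (by exact_mod_cast hn : (1 : ℝ) ≤ n)
  refine dcut_lt_of_forall fun S T => ?_
  rw [div_lt_div_iff₀ (by positivity) (by positivity)]
  calc |∑ i ∈ S, ∑ j ∈ T, (β i j - randAdj n β ω i j)| * √n
      ≤ (n + |∑ e, edgeDeviation β S T e (ω e)|) * √n := by
        rw [sum_sub_randAdj_eq]
        gcongr
        exact (abs_add_le _ _).trans (add_le_add_left (abs_sum_diagonal_le hβ S T) _)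
    _ < (n * √n + 3 * n * √n) * √n :=
        mul_lt_mul_of_pos_right
          (add_lt_add_of_le_of_lt (le_mul_of_one_le_right hn'.le hsqrt) (h S T)) (by positivity)
    _ = 4 * n ^ 2 := by linear_combination 4 * n * Real.sq_sqrt hn'.le

end RandomGraph

theorem random_graph_close_general (n : ℕ) (hn : 0 < n)
    (β : Fin n → Fin n → ℝ)
    (hβ : ∀ i j, β i j ∈ Set.Icc (0:ℝ) 1) :
    edgeSpace n {ω | dcut n β (randAdj n β ω) < 4 / Real.sqrt n} >
      1 - (2 : ENNReal)⁻¹ ^ n := by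
  let bad : Finset (Fin n) × Finset (Fin n) → Set (Sym2 (Fin n) → ℝ) := fun ST =>
    {ω | 3 * n * √n ≤ |∑ e, edgeDeviation β ST.1 ST.2 e (ω e)|}
  have hgood : (⋃ ST, bad ST)ᶜ ⊆ {ω | dcut n β (randAdj n β ω) < 4 / √n} := fun ω hω =>
    dcut_randAdj_lt hn hβ ω fun S T => lt_of_not_ge fun h => hω (Set.mem_iUnion.2 ⟨(S, T), h⟩)
  have hbad : (edgeSpace n).real (⋃ ST, bad ST) < 2⁻¹ ^ n :=
    calc (edgeSpace n).real (⋃ ST, bad ST) ≤ ∑ ST, (edgeSpace n).real (bad ST) :=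
          measureReal_iUnion_fintype_le _
      _ ≤ ∑ _ST : Finset (Fin n) × Finset (Fin n), 2 * exp (-(9 / 2) * n) :=
          sum_le_sum fun ST _ =>
            edgeSpace_real_abs_sum_edgeDeviation_ge_three_mul_le hn hβ ST.1 ST.2
      _ = 4 ^ n * (2 * exp (-(9 / 2) * n)) := by simp [Fintype.card_finset, ← mul_pow]
      _ < 2⁻¹ ^ n := four_pow_mul_two_mul_exp_lt hn
  refine one_sub_lt_measure_of_compl_subset hgood
    (pow_le_one₀ (by simp) (ENNReal.inv_le_one.2 one_le_two)) ?_
  rw [← ENNReal.toReal_lt_toReal (measure_ne_top _ _) (by simp)]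
  simpa [measureReal_def] using hbad

/-- For a weighted graph `G` on `n` nodes with node weights `1` and edge
weights in `[0,1]`, with probability greater than `1 − 2^{−n}` the random
graph `𝐆(G)` satisfies `d_□(G, 𝐆(G)) < 4/√n`. -/
theorem random_graph_close (n : ℕ) (hn : 0 < n)
    (β : Fin n → Fin n → ℝ) (hβs : ∀ i j, β i j = β j i)
    (hβ : ∀ i j, β i j ∈ Set.Icc (0:ℝ) 1) :
    edgeSpace n {ω | dcut n β (randAdj n β ω) < 4 / Real.sqrt n} >
      1 - (2 : ENNReal)⁻¹ ^ n :=
  random_graph_close_general n hn β hβ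
end

section
/- Let G and G' be weighted graphs with total node weight 1 and edge weights contained in an interval I. If G and G' have the same edge weight matrix but possibly different node weights α_i and α_i', then δ_□(G, G') ≤ |I| · Σ_i |α_i − α_i'|, where δ_□ is the cut distance defined via fractional overlays. -/
/-- `X` is a fractional overlay (coupling) of the node weight distributions
`α` and `α'`. -/
def IsCoupling {n n' : ℕ} (α : Fin n → ℝ) (α' : Fin n' → ℝ)
    (X : Fin n → Fin n' → ℝ) : Prop :=
  (∀ i u, 0 ≤ X i u) ∧ (∀ i, ∑ u, X i u = α i) ∧ (∀ u, ∑ i, X i u = α' u)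

/-- The cut distance `d_□(G[X], G'[Xᵀ])` of the two overlaid graphs on
`[n]×[n']` determined by a fractional overlay `X`: the maximum over subsets
`S, T ⊆ [n]×[n']` of the node-weighted cut discrepancy. -/
noncomputable def overlayDist {n n' : ℕ} (β : Fin n → Fin n → ℝ)
    (β' : Fin n' → Fin n' → ℝ) (X : Fin n → Fin n' → ℝ) : ℝ :=
  ⨆ S : Finset (Fin n × Fin n'), ⨆ T : Finset (Fin n × Fin n'),
    |∑ p ∈ S, ∑ q ∈ T, X p.1 p.2 * X q.1 q.2 * (β p.1 q.1 - β' p.2 q.2)|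

/-- The cut distance `δ_□(G,G')` of two weighted graphs with total node
weight `1`, via fractional overlays. -/
noncomputable def deltaCut {n n' : ℕ} (α : Fin n → ℝ) (β : Fin n → Fin n → ℝ)
    (α' : Fin n' → ℝ) (β' : Fin n' → Fin n' → ℝ) : ℝ :=
  sInf {r : ℝ | ∃ X : Fin n → Fin n' → ℝ, IsCoupling α α' X ∧
    r = overlayDist β β' X}

/-!
Overlay `G` and `G'` by the maximal coupling `X` of `α` and `α'`: it keeps the common mass
`min(αᵢ, α'ᵢ)` on the diagonal and spreads the residual mass `D = ½ Σᵢ |αᵢ − α'ᵢ|` as a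
product measure. Two overlaid node pairs that both lie on the diagonal see the same edge
weight in `G` and `G'`; every other pair contributes at most `|I|` times its weight, and
the pairs with an off-diagonal member carry mass at most `2D`.
-/

open Finset

section MaximalCoupling

variable {ι : Type*} [Fintype ι] (α α' : ι → ℝ)

def residualMass : ℝ := ∑ i, (α i - min (α i) (α' i))

-- If `residualMass α α' = 0` all residuals vanish, so the junk value `x / 0 = 0` is harmless.
noncomputable def maximalCoupling [DecidableEq ι] (i u : ι) : ℝ :=
  (if i = u then min (α i) (α' i) else 0) +
    (α i - min (α i) (α' i)) * (α' u - min (α u) (α' u)) / residualMass α α'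

variable {α α'}

lemma sub_min_le_residualMass (i : ι) : α i - min (α i) (α' i) ≤ residualMass α α' :=
  single_le_sum (f := fun j => α j - min (α j) (α' j))
    (fun _ _ => sub_nonneg.2 (min_le_left _ _)) (mem_univ i)

lemma residualMass_nonneg : 0 ≤ residualMass α α' :=
  sum_nonneg fun _ _ => sub_nonneg.2 (min_le_left _ _)

lemma sum_sub_min_right (h : ∑ i, α i = ∑ i, α' i) :
    ∑ i, (α' i - min (α i) (α' i)) = residualMass α α' := by
  rw [residualMass, sum_sub_distrib, sum_sub_distrib, h]

lemma sub_min_right_le_residualMass (h : ∑ i, α i = ∑ i, α' i) (i : ι) :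
    α' i - min (α i) (α' i) ≤ residualMass α α' :=
  sum_sub_min_right h ▸ single_le_sum (f := fun j => α' j - min (α j) (α' j))
    (fun _ _ => sub_nonneg.2 (min_le_right _ _)) (mem_univ i)

lemma sum_abs_sub_eq_two_mul_residualMass (h : ∑ i, α i = ∑ i, α' i) :
    ∑ i, |α i - α' i| = 2 * residualMass α α' := by
  have habs : ∀ i, |α i - α' i| = (α i - min (α i) (α' i)) + (α' i - min (α i) (α' i)) :=
    fun i => by linarith [max_sub_min_eq_abs (α i) (α' i), abs_sub_comm (α i) (α' i),
      min_add_max (α i) (α' i)]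
  rw [sum_congr rfl (fun i _ => habs i), sum_add_distrib, sum_sub_min_right h, residualMass]
  ring

variable [DecidableEq ι]

lemma maximalCoupling_self (i : ι) : maximalCoupling α α' i i = min (α i) (α' i) := by
  rcases le_total (α i) (α' i) with h | h <;> simp [maximalCoupling, h]

lemma sum_maximalCoupling_row (h : ∑ i, α i = ∑ i, α' i) (i : ι) :
    ∑ u, maximalCoupling α α' i u = α i := by
  have hres : residualMass α α' = 0 → α i - min (α i) (α' i) = 0 := fun h0 =>
    le_antisymm (h0 ▸ sub_min_le_residualMass i) (sub_nonneg.2 (min_le_left _ _))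
  simp only [maximalCoupling, sum_add_distrib, sum_ite_eq, mem_univ, if_true, mul_div_assoc,
    ← mul_sum, ← sum_div, sum_sub_min_right h]
  rw [← mul_div_assoc, mul_div_cancel_of_imp hres]
  ring

lemma sum_maximalCoupling_col (h : ∑ i, α i = ∑ i, α' i) (u : ι) :
    ∑ i, maximalCoupling α α' i u = α' u := by
  have hres : residualMass α α' = 0 → α' u - min (α u) (α' u) = 0 := fun h0 =>
    le_antisymm (h0 ▸ sub_min_right_le_residualMass h u) (sub_nonneg.2 (min_le_right _ _))
  simp only [maximalCoupling, sum_add_distrib, sum_ite_eq', mem_univ, if_true,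
    mul_comm _ (α' u - _), mul_div_assoc, ← mul_sum, ← sum_div]
  rw [← residualMass, ← mul_div_assoc, mul_div_cancel_of_imp hres]
  ring

lemma sum_sum_sub_trace_maximalCoupling (h : ∑ i, α i = ∑ i, α' i) :
    ∑ i, ∑ u, maximalCoupling α α' i u - ∑ i, maximalCoupling α α' i i = residualMass α α' := by
  simp only [sum_maximalCoupling_row h, maximalCoupling_self, residualMass, sum_sub_distrib]

end MaximalCoupling

lemma isCoupling_maximalCoupling {n : ℕ} {α α' : Fin n → ℝ} (hα : ∀ i, 0 ≤ α i)
    (hα' : ∀ i, 0 ≤ α' i) (h : ∑ i, α i = ∑ i, α' i) : IsCoupling α α' (maximalCoupling α α') := by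
  refine ⟨fun i u => add_nonneg ?_ ?_, sum_maximalCoupling_row h, sum_maximalCoupling_col h⟩
  · split_ifs
    exacts [le_min (hα i) (hα' i), le_rfl]
  · exact div_nonneg (mul_nonneg (sub_nonneg.2 (min_le_left _ _))
      (sub_nonneg.2 (min_le_right _ _))) residualMass_nonneg

lemma abs_sum_sum_le_sum_sum_abs {ι κ G : Type*} [Fintype ι] [Fintype κ] [AddCommGroup G]
    [LinearOrder G] [IsOrderedAddMonoid G] (f : ι → κ → G)
    (s : Finset ι) (t : Finset κ) : |∑ i ∈ s, ∑ j ∈ t, f i j| ≤ ∑ i, ∑ j, |f i j| :=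
  calc |∑ i ∈ s, ∑ j ∈ t, f i j| ≤ ∑ i ∈ s, ∑ j ∈ t, |f i j| :=
        (abs_sum_le_sum_abs _ _).trans (sum_le_sum fun _ _ => abs_sum_le_sum_abs _ _)
    _ ≤ ∑ i ∈ s, ∑ j, |f i j| :=
        sum_le_sum fun _ _ => sum_le_univ_sum_of_nonneg fun _ => abs_nonneg _
    _ ≤ ∑ i, ∑ j, |f i j| :=
        sum_le_univ_sum_of_nonneg fun _ => sum_nonneg fun _ _ => abs_nonneg _

section OffDiagonal

variable {ι : Type*} [Fintype ι] [DecidableEq ι]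

def offDiagIndicator (p : ι × ι) : ℝ := if p.1 = p.2 then 0 else 1

lemma sum_mul_offDiagIndicator (X : ι → ι → ℝ) :
    ∑ p : ι × ι, X p.1 p.2 * offDiagIndicator p = ∑ i, ∑ u, X i u - ∑ i, X i i := by
  have h : ∀ p : ι × ι, X p.1 p.2 * offDiagIndicator p
      = X p.1 p.2 - if p.1 = p.2 then X p.1 p.2 else 0 := fun p => by
    by_cases hp : p.1 = p.2 <;> simp [offDiagIndicator, hp]
  simp only [h, sum_sub_distrib, Fintype.sum_prod_type, sum_ite_eq, mem_univ, if_true]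

lemma sum_sum_mul_mul_offDiagIndicator_add (X : ι → ι → ℝ) :
    ∑ p : ι × ι, ∑ q : ι × ι,
        X p.1 p.2 * X q.1 q.2 * (offDiagIndicator p + offDiagIndicator q)
      = 2 * (∑ i, ∑ u, X i u) * (∑ i, ∑ u, X i u - ∑ i, X i i) := by
  have h : ∀ p q : ι × ι, X p.1 p.2 * X q.1 q.2 * (offDiagIndicator p + offDiagIndicator q)
      = X p.1 p.2 * offDiagIndicator p * X q.1 q.2
        + X p.1 p.2 * (X q.1 q.2 * offDiagIndicator q) := fun p q => by ring
  simp only [h, sum_add_distrib, ← sum_mul_sum, sum_mul_offDiagIndicator]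
  rw [← Fintype.sum_prod_type (fun p : ι × ι => X p.1 p.2)]
  ring

end OffDiagonal

lemma overlayDist_nonneg {n n' : ℕ} (β : Fin n → Fin n → ℝ) (β' : Fin n' → Fin n' → ℝ)
    (X : Fin n → Fin n' → ℝ) : 0 ≤ overlayDist β β' X :=
  le_ciSup_of_le (Finite.bddAbove_range _) ∅ <|
    le_ciSup_of_le (Finite.bddAbove_range _) ∅ (abs_nonneg _)

lemma deltaCut_le_overlayDist {n n' : ℕ} {α : Fin n → ℝ} {α' : Fin n' → ℝ}
    {β : Fin n → Fin n → ℝ} {β' : Fin n' → Fin n' → ℝ} {X : Fin n → Fin n' → ℝ}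
    (hX : IsCoupling α α' X) : deltaCut α β α' β' ≤ overlayDist β β' X :=
  csInf_le ⟨0, by rintro _ ⟨Y, -, rfl⟩; exact overlayDist_nonneg β β' Y⟩ ⟨X, hX, rfl⟩

section SameEdgeWeights

variable {n : ℕ} {β : Fin n → Fin n → ℝ} {c : ℝ}

lemma abs_sub_le_mul_offDiagIndicator_add (hβ : ∀ i j k l, |β i j - β k l| ≤ c)
    (p q : Fin n × Fin n) :
    |β p.1 q.1 - β p.2 q.2| ≤ c * (offDiagIndicator p + offDiagIndicator q) := by
  have hc : 0 ≤ c := (abs_nonneg _).trans (hβ p.1 p.1 p.1 p.1)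
  have hpq := hβ p.1 q.1 p.2 q.2
  by_cases hp : p.1 = p.2 <;> by_cases hq : q.1 = q.2 <;>
    simp only [offDiagIndicator, hp, hq, if_true, if_false, sub_self, abs_zero] at hpq ⊢ <;>
    linarith

lemma overlayDist_self_le {X : Fin n → Fin n → ℝ} (hX : ∀ i u, 0 ≤ X i u)
    (hβ : ∀ i j k l, |β i j - β k l| ≤ c) :
    overlayDist β β X ≤ 2 * c * (∑ i, ∑ u, X i u) * (∑ i, ∑ u, X i u - ∑ i, X i i) := by
  refine ciSup_le fun S => ciSup_le fun T => ?_
  calc |∑ p ∈ S, ∑ q ∈ T, X p.1 p.2 * X q.1 q.2 * (β p.1 q.1 - β p.2 q.2)|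
      ≤ ∑ p : Fin n × Fin n, ∑ q : Fin n × Fin n,
          |X p.1 p.2 * X q.1 q.2 * (β p.1 q.1 - β p.2 q.2)| :=
        abs_sum_sum_le_sum_sum_abs _ S T
    _ ≤ ∑ p : Fin n × Fin n, ∑ q : Fin n × Fin n,
          c * (X p.1 p.2 * X q.1 q.2 * (offDiagIndicator p + offDiagIndicator q)) := by
        refine sum_le_sum fun p _ => sum_le_sum fun q _ => ?_
        rw [abs_mul, abs_of_nonneg (mul_nonneg (hX _ _) (hX _ _)), mul_left_comm]
        exact mul_le_mul_of_nonneg_left (abs_sub_le_mul_offDiagIndicator_add hβ p q)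
          (mul_nonneg (hX _ _) (hX _ _))
    _ = 2 * c * (∑ i, ∑ u, X i u) * (∑ i, ∑ u, X i u - ∑ i, X i i) := by
        simp only [← mul_sum, sum_sum_mul_mul_offDiagIndicator_add]
        ring

end SameEdgeWeights

theorem deltaCut_le_of_eq_edgeweights_general {n : ℕ}
    (α α' : Fin n → ℝ) (hα : ∀ i, 0 < α i) (hα' : ∀ i, 0 < α' i)
    (hsum : ∑ i, α i = 1) (hsum' : ∑ i, α' i = 1)
    (a b : ℝ)
    (β : Fin n → Fin n → ℝ)
    (hβ : ∀ i j, β i j ∈ Set.Icc a b) :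
    deltaCut α β α' β ≤ (b - a) * ∑ i, |α i - α' i| := by
  have hmass : ∑ i, α i = ∑ i, α' i := hsum.trans hsum'.symm
  have hβ' : ∀ i j k l, |β i j - β k l| ≤ b - a := fun i j k l =>
    abs_sub_le_of_le_of_le (hβ i j).1 (hβ i j).2 (hβ k l).1 (hβ k l).2
  have hX := isCoupling_maximalCoupling (fun i => (hα i).le) (fun i => (hα' i).le) hmass
  calc deltaCut α β α' β ≤ overlayDist β β (maximalCoupling α α') := deltaCut_le_overlayDist hX
    _ ≤ 2 * (b - a) * (∑ i, ∑ u, maximalCoupling α α' i u)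
          * (∑ i, ∑ u, maximalCoupling α α' i u - ∑ i, maximalCoupling α α' i i) :=
        overlayDist_self_le hX.1 hβ'
    _ = (b - a) * ∑ i, |α i - α' i| := by
        rw [sum_sum_sub_trace_maximalCoupling hmass, sum_abs_sub_eq_two_mul_residualMass hmass]
        simp only [hX.2.1, hsum]
        ring

/-- If `G` and `G'` have total node weight `1`, edge weights in an interval
`[a,b]`, equal edge weights but possibly different node weights, then
`δ_□(G,G') ≤ (b−a)·Σᵢ|αᵢ − αᵢ'|`. -/
theorem deltaCut_le_of_eq_edgeweights {n : ℕ}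
    (α α' : Fin n → ℝ) (hα : ∀ i, 0 < α i) (hα' : ∀ i, 0 < α' i)
    (hsum : ∑ i, α i = 1) (hsum' : ∑ i, α' i = 1)
    (a b : ℝ) (hab : a ≤ b)
    (β : Fin n → Fin n → ℝ) (hβs : ∀ i j, β i j = β j i)
    (hβ : ∀ i j, β i j ∈ Set.Icc a b) :
    deltaCut α β α' β ≤ (b - a) * ∑ i, |α i - α' i| :=
  deltaCut_le_of_eq_edgeweights_general α α' hα hα' hsum hsum' a b β hβ
end
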